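/- arXiv:2010.07631 — 10 statements merged into one kernel-verified Lean document; each statement's English description precedes it below -/
import Mathlib

section
/- Let n, m ∈ ℕ, let A, B be characters of the symmetric group S_n and Z a character of S_m. Then the induced characters (A × Z)↑^{S_{n+m}} and (B × Z)↑^{S_{n+m}} from S_n × S_m to S_{n+m} are equal if and only if A = B. -/
/-!
If the two induced characters agree, the class function `D = χ_A - χ_B` of `S_n` induces
`(D × Z)↑ = 0`. Suppose `D ≠ 0` and pick `σ` with `D σ ≠ 0` moving as few points as possible.
Evaluate the induction formula at `g = σ × 1`: a conjugate `τ × ρ` of `g` in the Young subgroup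
has cycle type `type(τ) + type(ρ) = type(σ)`, so if `D τ ≠ 0` the minimality of `σ` forces
`ρ = 1`, and then `τ` is conjugate to `σ`. Hence every nonzero term of the formula equals
`D(σ) Z(1) ≠ 0`, and there is at least one such term, so the induced value at `g` is not zero.
-/

open scoped Classical
open Equiv

noncomputable section

/-- The isomorphism `Perm α ≃* Perm β` induced by `e : α ≃ β`, as a monoid hom. -/
def permCongrHom {α β : Type*} (e : α ≃ β) : Perm α →* Perm β where
  toFun σ := e.permCongr σ
  map_one' := by ext x; simp
  map_mul' := by intro σ τ; ext x; simp [Equiv.permCongr_apply, Equiv.Perm.mul_apply]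

/-- Induction of a function along an (injective) homomorphism `f : H →* G`. -/
def indVia {H G : Type*} [Group H] [Fintype H] [Group G] [Fintype G]
    (f : H →* G) (φ : H → ℂ) (g : G) : ℂ :=
  (Nat.card H : ℂ)⁻¹ * ∑ x : G, ∑ h : H, if f h = x⁻¹ * g * x then φ h else 0

/-- The Young subgroup embedding `S_n × S_m → S_{n+m}`. -/
def youngEmb (n m : ℕ) : Perm (Fin n) × Perm (Fin m) →* Perm (Fin (n + m)) :=
  (_root_.permCongrHom finSumFinEquiv).comp (Equiv.Perm.sumCongrHom (Fin n) (Fin m))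

section Induction

variable {H G : Type*} [Group H] [Fintype H] [Group G] [Fintype G]

lemma indVia_sub (f : H →* G) (φ ψ : H → ℂ) : indVia f (φ - ψ) = indVia f φ - indVia f ψ := by
  funext g
  simp only [indVia, Pi.sub_apply, ← mul_sub, ← Finset.sum_sub_distrib]
  congr 1
  refine Finset.sum_congr rfl fun x _ => Finset.sum_congr rfl fun h _ => ?_
  split_ifs <;> simp

lemma indVia_apply_ne_zero {f : H →* G} {φ : H → ℂ} {g : G} {c : ℂ} (hc : c ≠ 0) (h₀ : H)
    (hf₀ : f h₀ = g) (hφ₀ : φ h₀ = c) (hφ : ∀ h, IsConj (f h) g → φ h ≠ 0 → φ h = c) :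
    indVia f φ g ≠ 0 := by
  set S := Finset.univ.filter fun q : G × H => f q.2 = q.1⁻¹ * g * q.1 ∧ φ q.2 ≠ 0
  have hterm : ∀ x h, (if f h = x⁻¹ * g * x then φ h else 0) = if (x, h) ∈ S then c else 0 := by
    intro x h
    by_cases hx : f h = x⁻¹ * g * x
    · by_cases h0 : φ h = 0
      · simp [S, hx, h0]
      · have hconj : IsConj (f h) g := isConj_iff.mpr ⟨x, by rw [hx]; group⟩
        simp [S, hx, hφ h hconj h0]
    · simp [S, hx]
  have hS : S.Nonempty := ⟨(1, h₀), by simp [S, hf₀, hφ₀, hc]⟩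
  simp only [indVia, hterm, ← Fintype.sum_prod_type', Finset.sum_ite_mem, Finset.univ_inter,
    Finset.sum_const, nsmul_eq_mul]
  exact mul_ne_zero (inv_ne_zero (by exact_mod_cast Nat.card_pos.ne'))
    (mul_ne_zero (by exact_mod_cast hS.card_pos.ne') hc)

end Induction

namespace Equiv.Perm

variable {α β : Type*}

lemma permCongr_eq_extendDomain (e : α ≃ β) (σ : Perm α) :
    e.permCongr σ = σ.extendDomain (e.trans (subtypeUnivEquiv fun _ => trivial).symm) := by
  ext x
  simp [permCongr_apply, extendDomain_apply_subtype]

lemma sumCongr_one_eq_extendDomain [DecidablePred (· ∈ Set.range (Sum.inl : α → α ⊕ β))]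
    (σ : Perm α) :
    sumCongr σ (1 : Perm β) = σ.extendDomain (Equiv.Set.rangeInl α β).symm := by
  ext (a | b)
  · exact (extendDomain_apply_image σ (Equiv.Set.rangeInl α β).symm a).symm
  · exact (extendDomain_apply_not_subtype σ (Equiv.Set.rangeInl α β).symm (by simp)).symm

lemma one_sumCongr_eq_extendDomain [DecidablePred (· ∈ Set.range (Sum.inr : β → α ⊕ β))]
    (τ : Perm β) :
    sumCongr (1 : Perm α) τ = τ.extendDomain (Equiv.Set.rangeInr α β).symm := by
  ext (a | b)
  · exact (extendDomain_apply_not_subtype τ (Equiv.Set.rangeInr α β).symm (by simp)).symm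
  · exact (extendDomain_apply_image τ (Equiv.Set.rangeInr α β).symm b).symm

variable [Fintype α] [Fintype β] [DecidableEq α] [DecidableEq β]

lemma cycleType_permCongr (e : α ≃ β) (σ : Perm α) : (e.permCongr σ).cycleType = σ.cycleType := by
  rw [permCongr_eq_extendDomain, cycleType_extendDomain]

lemma cycleType_sumCongr (σ : Perm α) (τ : Perm β) :
    (sumCongr σ τ).cycleType = σ.cycleType + τ.cycleType := by
  have hdisj : Disjoint (sumCongr σ 1) (sumCongr 1 τ) := by
    rintro (a | b) <;> simp
  rw [show sumCongr σ τ = sumCongr σ 1 * sumCongr 1 τ by rw [sumCongr_mul, mul_one, one_mul],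
    hdisj.cycleType_mul, sumCongr_one_eq_extendDomain, cycleType_extendDomain,
    one_sumCongr_eq_extendDomain, cycleType_extendDomain]

end Equiv.Perm

lemma cycleType_youngEmb {n m : ℕ} (p : Perm (Fin n) × Perm (Fin m)) :
    (youngEmb n m p).cycleType = p.1.cycleType + p.2.cycleType := by
  show (finSumFinEquiv.permCongr (sumCongr p.1 p.2)).cycleType = _
  rw [Perm.cycleType_permCongr, Perm.cycleType_sumCongr]

lemma eq_one_and_isConj_of_isConj_youngEmb {n m : ℕ} {p : Perm (Fin n) × Perm (Fin m)}
    {σ : Perm (Fin n)} (hconj : IsConj (youngEmb n m p) (youngEmb n m (σ, 1)))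
    (hle : σ.support.card ≤ p.1.support.card) : p.2 = 1 ∧ IsConj p.1 σ := by
  rw [Perm.isConj_iff_cycleType_eq, cycleType_youngEmb, cycleType_youngEmb,
    Perm.cycleType_one, add_zero] at hconj
  have hcard := congrArg Multiset.sum hconj
  simp only [Multiset.sum_add, Perm.sum_cycleType] at hcard
  have h2 : p.2 = 1 := Perm.card_support_eq_zero.mp (by omega)
  rw [h2, Perm.cycleType_one, add_zero] at hconj
  exact ⟨h2, Perm.isConj_iff_cycleType_eq.mpr hconj⟩

lemma eq_zero_of_indVia_youngEmb_eq_zero {n m : ℕ} {D : Perm (Fin n) → ℂ}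
    (hD : ∀ σ c, D (c * σ * c⁻¹) = D σ) {Z : Perm (Fin m) → ℂ} (hZ : Z 1 ≠ 0)
    (h : indVia (youngEmb n m) (fun p => D p.1 * Z p.2) = 0) : D = 0 := by
  by_contra hne
  obtain ⟨σ, hσ, hmin⟩ := Finset.exists_min_image (Finset.univ.filter fun σ => D σ ≠ 0)
    (fun σ => σ.support.card) (by simpa [Finset.filter_nonempty_iff, funext_iff] using hne)
  simp only [Finset.mem_filter, Finset.mem_univ, true_and] at hσ hmin
  refine indVia_apply_ne_zero (mul_ne_zero hσ hZ) (σ, 1) rfl rfl ?_ (congrFun h _)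
  intro p hconj hp
  obtain ⟨h2, hconj1⟩ :=
    eq_one_and_isConj_of_isConj_youngEmb hconj (hmin _ (left_ne_zero_of_mul hp))
  obtain ⟨c, rfl⟩ := isConj_iff.mp hconj1
  rw [h2, hD]

/-- `(A × Z)↑^{S_{n+m}} = (B × Z)↑^{S_{n+m}}` iff `A = B`, for characters
`A, B` of `S_n` and a character `Z` of `S_m` (of a nonzero representation). -/
theorem stmt1 (n m : ℕ)
    (VA VB : FDRep ℂ (Perm (Fin n))) (VZ : FDRep ℂ (Perm (Fin m)))
    (hZ : VZ.character 1 ≠ 0) :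
    indVia (youngEmb n m) (fun x => VA.character x.1 * VZ.character x.2) =
      indVia (youngEmb n m) (fun x => VB.character x.1 * VZ.character x.2) ↔
    VA.character = VB.character := by
  refine ⟨fun h => ?_, fun h => by simp only [h]⟩
  have hdiff : (fun x : Perm (Fin n) × Perm (Fin m) =>
      (VA.character - VB.character) x.1 * VZ.character x.2) =
      (fun x => VA.character x.1 * VZ.character x.2) -
        (fun x => VB.character x.1 * VZ.character x.2) := by
    funext x
    simp only [Pi.sub_apply, sub_mul]
  refine sub_eq_zero.mp (eq_zero_of_indVia_youngEmb_eq_zero ?_ hZ ?_)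
  · intro σ c
    simp only [Pi.sub_apply, FDRep.char_conj]
  · rw [hdiff, indVia_sub, h, sub_self]
end
end

section
/- Let b, n, m ∈ ℕ with n > m. Let P × Q ≤ S_{bn} × S_m ≤ S_{bn+m}, where P contains an element σ which is a product of b disjoint n-cycles, and let g ∈ Q. Then for class functions χ of P and η of Q, one has (χ × η)↑^{S_{bn+m}}(σg) = χ↑^{S_{bn}}(σ) · η↑^{S_m}(g). -/
/-!
Induction from `H` to `G` sums over the conjugates of the argument by all `x : G`. For
`σ g` with `σ` a product of `b` disjoint `n`-cycles, only conjugators in `S_{bn} × S_m` can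
bring `σ g` into the Young subgroup: a point of the `S_m`-block has period at most `m` under
the conjugate, so its image under the conjugator has the same period under `σ g`, which rules
out the `S_{bn}`-block, where every `σ`-period is `n > m`. The sum over `S_{bn+m}` therefore
collapses to a sum over `S_{bn} × S_m`, which factors.
-/

open scoped Classical
open Equiv

noncomputable section

section Induction

variable {H K G : Type*} [Group H] [Fintype H] [Group K] [Fintype K] [Group G] [Fintype G]

theorem indVia_comp_of_conj_mem_range (Y : K →* G) (hY : Function.Injective Y) (f : H →* K)
    (φ : H → ℂ) (k : K) (hfus : ∀ x : G, x⁻¹ * Y k * x ∈ Y.range → x ∈ Y.range) :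
    indVia (Y.comp f) φ (Y k) = indVia f φ k := by
  unfold indVia
  congr 1
  symm
  refine Fintype.sum_of_injective Y hY _ _ ?_ fun y => ?_
  · intro x hx
    refine Finset.sum_eq_zero fun h _ => if_neg fun hconj => hx ?_
    exact hfus x ⟨f h, hconj⟩
  · have hconj : ∀ h : H, Y (f h) = (Y y)⁻¹ * Y k * Y y ↔ f h = y⁻¹ * k * y := fun h => by
      rw [← map_inv, ← map_mul, ← map_mul, hY.eq_iff]
    simp only [MonoidHom.comp_apply, hconj]

end Induction

theorem indVia_prodMap {H₁ G₁ H₂ G₂ : Type*} [Group H₁] [Fintype H₁] [Group G₁] [Fintype G₁]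
    [Group H₂] [Fintype H₂] [Group G₂] [Fintype G₂] (f₁ : H₁ →* G₁) (f₂ : H₂ →* G₂)
    (φ₁ : H₁ → ℂ) (φ₂ : H₂ → ℂ) (g₁ : G₁) (g₂ : G₂) :
    indVia (f₁.prodMap f₂) (fun h => φ₁ h.1 * φ₂ h.2) (g₁, g₂) =
      indVia f₁ φ₁ g₁ * indVia f₂ φ₂ g₂ := by
  unfold indVia
  rw [Nat.card_prod, Nat.cast_mul, mul_inv, mul_mul_mul_comm, Finset.sum_mul_sum]
  congr 1
  rw [Fintype.sum_prod_type]
  refine Finset.sum_congr rfl fun x₁ _ => Finset.sum_congr rfl fun x₂ _ => ?_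
  rw [Finset.sum_mul_sum, Fintype.sum_prod_type]
  simp only [MonoidHom.coe_prodMap, Prod.map_apply, Prod.inv_mk, Prod.mk_mul_mk, Prod.mk.injEq,
    ite_zero_mul_ite_zero]

namespace Equiv.Perm

section Period

variable {α : Type*} [Fintype α] [DecidableEq α]

theorem period_eq_card_support_cycleOf {σ : Perm α} {i : α} (hi : σ i ≠ i) :
    MulAction.period σ i = (σ.cycleOf i).support.card := by
  have hc := isCycle_cycleOf σ hi
  refine Nat.dvd_right_iff_eq.mp fun k => ?_
  rw [← MulAction.pow_smul_eq_iff_period_dvd, Perm.smul_def, ← cycleOf_pow_apply_self,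
    ← hc.pow_eq_one_iff' (by rwa [cycleOf_apply_self]), ← hc.orderOf, orderOf_dvd_iff_pow_eq_one]

theorem period_eq_of_cycleType_eq_replicate {σ : Perm α} {b n : ℕ}
    (hσ : σ.cycleType = Multiset.replicate b n) (hcard : Fintype.card α = b * n) (i : α) :
    MulAction.period σ i = n := by
  have hsupp : σ.support = Finset.univ := by
    apply Finset.eq_univ_of_card
    rw [← sum_cycleType, hσ, Multiset.sum_replicate, smul_eq_mul, hcard]
  have hi : i ∈ σ.support := hsupp ▸ Finset.mem_univ i
  have hmem : (σ.cycleOf i).support.card ∈ σ.cycleType := by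
    rw [cycleType_def]
    exact Multiset.mem_map_of_mem _ (cycleOf_mem_cycleFactorsFinset_iff.mpr hi)
  rw [period_eq_card_support_cycleOf (mem_support.mp hi)]
  exact Multiset.eq_of_mem_replicate (hσ ▸ hmem)

end Period

theorem mem_range_sumCongrHom_of_conj {α β : Type*} [Finite α] [Fintype β]
    {σ : Perm α} (g : Perm β) (hσ : ∀ a : α, Fintype.card β < MulAction.period σ a)
    {x : Perm (α ⊕ β)} (hx : x⁻¹ * sumCongrHom α β (σ, g) * x ∈ (sumCongrHom α β).range) :
    x ∈ (sumCongrHom α β).range := by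
  obtain ⟨⟨p, q⟩, hpq⟩ := hx
  refine mem_sumCongrHom_range_of_perm_mapsTo_inl ((perm_mapsTo_inl_iff_mapsTo_inr x).mpr ?_)
  rintro _ ⟨j, rfl⟩
  set τ := sumCongrHom α β (σ, g)
  set k := MulAction.period q j
  have hk_pos : 0 < k := MulAction.period_pos_of_orderOf_pos (orderOf_pos q) j
  have hk_le : k ≤ Fintype.card β := Function.minimalPeriod_le_card
  have hfix : (τ ^ k) (x (.inr j)) = x (.inr j) := by
    have hq : (sumCongrHom α β (p, q) ^ k) (.inr j) = .inr j := by
      rw [← map_pow, Prod.pow_mk, sumCongrHom_apply, sumCongr_apply, Sum.map_inr,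
        ← Perm.smul_def, MulAction.pow_period_smul]
    have hconj : (x⁻¹ * τ * x) ^ k = x⁻¹ * τ ^ k * x := by
      simpa using conj_pow (a := x⁻¹) (b := τ) (i := k)
    rwa [hpq, hconj, mul_apply, mul_apply, inv_eq_iff_eq] at hq
  rcases hxj : x (.inr j) with a | j'
  · rw [hxj, ← map_pow, Prod.pow_mk, sumCongrHom_apply, sumCongr_apply, Sum.map_inl,
      Sum.inl.injEq, ← Perm.smul_def] at hfix
    have := MulAction.period_le_of_fixed hk_pos hfix
    exact absurd (hσ a) (by omega)
  · exact ⟨j', rfl⟩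

end Equiv.Perm

theorem stmt2_general (b n m : ℕ) (hnm : m < n)
    (P : Subgroup (Perm (Fin (b * n)))) (Q : Subgroup (Perm (Fin m)))
    (σ : Perm (Fin (b * n)))
    (hσ : σ.cycleType = Multiset.replicate b n)
    (g : Perm (Fin m))
    (χ : ↥P → ℂ) (η : ↥Q → ℂ) :
    indVia ((youngEmb (b * n) m).comp (P.subtype.prodMap Q.subtype))
        (fun x => χ x.1 * η x.2) (youngEmb (b * n) m (σ, g)) =
      indVia P.subtype χ σ * indVia Q.subtype η g := by
  have hperiod : ∀ i, Fintype.card (Fin m) < MulAction.period σ i := fun i => by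
    rwa [Fintype.card_fin, Perm.period_eq_of_cycleType_eq_replicate hσ (Fintype.card_fin _) i]
  have hcongr : Function.Bijective (_root_.permCongrHom (finSumFinEquiv (m := b * n) (n := m))) :=
    (Equiv.permCongr _).bijective
  rw [youngEmb, MonoidHom.comp_assoc, MonoidHom.comp_apply,
    indVia_comp_of_conj_mem_range _ hcongr.1 _ _ _ fun x _ => hcongr.2 x,
    indVia_comp_of_conj_mem_range _ Perm.sumCongrHom_injective _ _ _
      fun _ => Perm.mem_range_sumCongrHom_of_conj g hperiod,
    indVia_prodMap]

/-- for `P × Q ≤ S_{bn} × S_m ≤ S_{bn+m}` with `n > m`, `σ ∈ P` a product of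
`b` disjoint `n`-cycles and `g ∈ Q`, induction of the outer product of class functions
evaluated at `σ g` factors as the product of the two induced values. -/
theorem stmt2 (b n m : ℕ) (hnm : m < n)
    (P : Subgroup (Perm (Fin (b * n)))) (Q : Subgroup (Perm (Fin m)))
    (σ : Perm (Fin (b * n))) (hσP : σ ∈ P)
    (hσ : σ.cycleType = Multiset.replicate b n)
    (g : Perm (Fin m)) (hg : g ∈ Q)
    (χ : ↥P → ℂ) (η : ↥Q → ℂ)
    (hχ : ∀ x y : ↥P, χ (y * x * y⁻¹) = χ x)
    (hη : ∀ x y : ↥Q, η (y * x * y⁻¹) = η x) :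
    indVia ((youngEmb (b * n) m).comp (P.subtype.prodMap Q.subtype))
        (fun x => χ x.1 * η x.2) (youngEmb (b * n) m (σ, g)) =
      indVia P.subtype χ σ * indVia Q.subtype η g :=
  stmt2_general b n m hnm P Q σ hσ g χ η
end
end

section
/- Let p be a prime, k ∈ ℕ, and let P_{p^k} = P_{p^{k-1}} ≀ P_p be a Sylow p-subgroup of S_{p^k}. Let x = (f_1,…,f_p; σ) ∈ P_{p^k} with f_i ∈ P_{p^{k-1}} and σ ∈ P_p. If x has a fixed point in [p^k], then σ = 1. Moreover, x is a p^k-cycle if and only if σ ≠ 1 and the product f_{σ^{p-1}(1)} ⋯ f_{σ(1)} f_1 is a p^{k-1}-cycle in S_{p^{k-1}}. -/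
open scoped Classical
open Equiv

noncomputable section

/-- `τ` is a single cycle on all of `α` (an `|α|`-cycle). -/
def IsFullCycle {α : Type*} (τ : Perm α) : Prop := ∀ x y : α, ∃ n : ℕ, (τ ^ n) x = y

/-- The imprimitive (wreath-product) permutation `(f_1,…,f_p; σ)` of `ι × α`:
`(j, y) ↦ (σ j, f j y)`. -/
def wrP {ι α : Type*} (f : ι → Perm α) (σ : Perm ι) : Perm (ι × α) where
  toFun x := (σ x.1, f x.1 x.2)
  invFun x := (σ.symm x.1, (f (σ.symm x.1)).symm x.2)
  left_inv := by rintro ⟨j, y⟩; simp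
  right_inv := by rintro ⟨j, y⟩; simp

lemma fix_eq_one {p : ℕ} {c : Perm (Fin p)} (hc : IsFullCycle c)
    {τ : Perm (Fin p)} (hτ : τ ∈ Subgroup.zpowers c) {j : Fin p} (h : τ j = j) : τ = 1 := by
  obtain ⟨m, rfl⟩ := Subgroup.mem_zpowers_iff.mp hτ
  refine Equiv.ext fun i => ?_
  rw [Equiv.Perm.one_apply]
  obtain ⟨n, hn⟩ := hc j i
  have comm : (c ^ (m : ℤ)) * (c ^ n) = (c ^ n) * (c ^ (m : ℤ)) := by
    rw [← zpow_natCast c n, ← zpow_add, ← zpow_add, add_comm]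
  calc (c ^ (m : ℤ)) i = (c ^ (m : ℤ)) ((c ^ n) j) := by rw [hn]
    _ = ((c ^ (m : ℤ)) * (c ^ n)) j := rfl
    _ = ((c ^ n) * (c ^ (m : ℤ))) j := by rw [comm]
    _ = (c ^ n) j := by rw [Equiv.Perm.mul_apply, h]
    _ = i := hn

lemma pow_fix_dvd {p : ℕ} {c : Perm (Fin p)} (hc : IsFullCycle c)
    {σ : Perm (Fin p)} (hσ : σ ∈ Subgroup.zpowers c) {j : Fin p} {a b : ℕ} (hab : a ≤ b)
    (h : (σ ^ a) j = (σ ^ b) j) : orderOf σ ∣ b - a := by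
  have h0 : (σ ^ (b - a)) ((σ ^ a) j) = (σ ^ a) j := by
    rw [← Equiv.Perm.mul_apply, ← pow_add, Nat.sub_add_cancel hab, ← h]
  have h1 : σ ^ (b - a) = 1 :=
    fix_eq_one hc (Subgroup.pow_mem _ hσ _) h0
  exact orderOf_dvd_of_pow_eq_one h1

lemma orderOf_fullCycle {p : ℕ} (hp : p.Prime) {c : Perm (Fin p)} (hc : IsFullCycle c) :
    orderOf c = p := by
  have hpos : 0 < p := hp.pos
  have hco : 0 < orderOf c := orderOf_pos c
  have hinj : Function.Injective (fun n : Fin (orderOf c) => (c ^ (n : ℕ)) (⟨0, hpos⟩ : Fin p)) := by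
    intro a b hab
    rcases le_total (a : ℕ) (b : ℕ) with hle | hle
    · have hba : (b : ℕ) - (a : ℕ) = 0 := by
        by_contra hne
        exact hne (Nat.eq_zero_of_dvd_of_lt (pow_fix_dvd hc (Subgroup.mem_zpowers c) hle hab)
          (lt_of_le_of_lt (Nat.sub_le _ _) b.isLt))
      exact Fin.ext (le_antisymm hle (Nat.le_of_sub_eq_zero hba))
    · have hba : (a : ℕ) - (b : ℕ) = 0 := by
        by_contra hne
        exact hne (Nat.eq_zero_of_dvd_of_lt (pow_fix_dvd hc (Subgroup.mem_zpowers c) hle hab.symm)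
          (lt_of_le_of_lt (Nat.sub_le _ _) a.isLt))
      exact Fin.ext (le_antisymm (Nat.le_of_sub_eq_zero hba) hle)
  have hsurj : Function.Surjective (fun n : Fin (orderOf c) => (c ^ (n : ℕ)) (⟨0, hpos⟩ : Fin p)) := by
    intro i
    obtain ⟨n, hn⟩ := hc ⟨0, hpos⟩ i
    refine ⟨⟨n % orderOf c, Nat.mod_lt _ hco⟩, ?_⟩
    simpa [pow_mod_orderOf] using hn
  have h1 : orderOf c ≤ p := by
    simpa using Fintype.card_le_of_injective _ hinj
  have h2 : p ≤ orderOf c := by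
    simpa using Fintype.card_le_of_surjective _ hsurj
  omega

lemma orderOf_mem_zpowers {p : ℕ} (hp : p.Prime) {c : Perm (Fin p)} (hc : IsFullCycle c)
    {σ : Perm (Fin p)} (hσ : σ ∈ Subgroup.zpowers c) (hne : σ ≠ 1) : orderOf σ = p := by
  have hdvd : orderOf σ ∣ p := by
    obtain ⟨m, rfl⟩ := Subgroup.mem_zpowers_iff.mp hσ
    apply orderOf_dvd_of_pow_eq_one
    have h1 : ((c ^ (m : ℤ)) ^ p) = (c ^ p) ^ (m : ℤ) := by
      rw [← zpow_natCast (c ^ (m:ℤ)) p, ← zpow_mul, mul_comm, zpow_mul, zpow_natCast]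
    have h2 := pow_orderOf_eq_one c
    rw [orderOf_fullCycle hp hc] at h2
    rw [h1, h2, one_zpow]
  rcases (Nat.Prime.eq_one_or_self_of_dvd hp _ hdvd) with h | h
  · exact absurd (orderOf_eq_one_iff.mp h) hne
  · exact h

lemma fullCycle_of_ne_one {p : ℕ} (hp : p.Prime) {c : Perm (Fin p)} (hc : IsFullCycle c)
    {σ : Perm (Fin p)} (hσ : σ ∈ Subgroup.zpowers c) (hne : σ ≠ 1) : IsFullCycle σ := by
  have ho : orderOf σ = p := orderOf_mem_zpowers hp hc hσ hne
  intro i j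
  have hinj : Function.Injective (fun n : Fin p => (σ ^ (n : ℕ)) i) := by
    intro a b hab
    rcases le_total (a : ℕ) (b : ℕ) with hle | hle
    · have hba : (b : ℕ) - (a : ℕ) = 0 := by
        by_contra hnz
        have hd := pow_fix_dvd hc hσ hle hab
        rw [ho] at hd
        exact hnz (Nat.eq_zero_of_dvd_of_lt hd (lt_of_le_of_lt (Nat.sub_le _ _) b.isLt))
      exact Fin.ext (le_antisymm hle (Nat.le_of_sub_eq_zero hba))
    · have hba : (a : ℕ) - (b : ℕ) = 0 := by
        by_contra hnz
        have hd := pow_fix_dvd hc hσ hle hab.symm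
        rw [ho] at hd
        exact hnz (Nat.eq_zero_of_dvd_of_lt hd (lt_of_le_of_lt (Nat.sub_le _ _) a.isLt))
      exact Fin.ext (le_antisymm (Nat.le_of_sub_eq_zero hba) hle)
  obtain ⟨n, hn⟩ := Finite.injective_iff_surjective.mp hinj j
  exact ⟨(n : ℕ), hn⟩

lemma wrP_pow_apply {ι α : Type*} (f : ι → Perm α) (σ : Perm ι) (n : ℕ) (j : ι) (y : α) :
    ((wrP f σ) ^ n) (j, y) =
      ((σ ^ n) j, (((List.range n).map (fun i => f ((σ ^ i) j))).reverse.prod) y) := by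
  induction n with
  | zero => simp
  | succ n ih =>
      rw [pow_succ', Equiv.Perm.mul_apply, ih, List.range_succ]
      show (σ ((σ ^ n) j), f ((σ ^ n) j) _) = _
      rw [List.map_append, List.reverse_append]
      simp [pow_succ', Equiv.Perm.mul_apply]


/-- for `x = (f_1,…,f_p;σ) ∈ P_{p^k} = P_{p^{k-1}} ≀ P_p`, if `x` has a fixed
point then `σ = 1`; and `x` is a `p^k`-cycle iff `σ ≠ 1` and
`f_{σ^{p-1}(1)} ⋯ f_{σ(1)} f_1` is a `p^{k-1}`-cycle. -/
theorem stmt3 (p k : ℕ) (hp : p.Prime) (hk : 1 ≤ k)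
    (c : Perm (Fin p)) (hc : IsFullCycle c)
    (Q : Sylow p (Perm (Fin (p ^ (k - 1)))))
    (f : Fin p → Perm (Fin (p ^ (k - 1)))) (hf : ∀ i, f i ∈ (Q : Subgroup _))
    (σ : Perm (Fin p)) (hσ : σ ∈ Subgroup.zpowers c) :
    ((∃ x, wrP f σ x = x) → σ = 1) ∧
      (IsFullCycle (wrP f σ) ↔ σ ≠ 1 ∧
        IsFullCycle (((List.range p).map (fun i => f ((σ ^ i) ⟨0, hp.pos⟩))).reverse.prod)) := by
  have hpos : 0 < p := hp.pos
  have hN : 0 < p ^ (k - 1) := pow_pos hpos _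
  set o : Fin p := ⟨0, hpos⟩ with ho
  set z0 : Fin (p ^ (k - 1)) := ⟨0, hN⟩ with hz0
  set g : Perm (Fin (p ^ (k - 1))) :=
    ((List.range p).map (fun i => f ((σ ^ i) o))).reverse.prod with hgdef
  set x : Perm (Fin p × Fin (p ^ (k - 1))) := wrP f σ with hxdef
  constructor
  · rintro ⟨⟨j, y⟩, hfix⟩
    have h1 : σ j = j := congrArg Prod.fst hfix
    exact fix_eq_one hc hσ h1
  · constructor
    · intro h
      have hne : σ ≠ 1 := by
        intro h1
        obtain ⟨n, hn⟩ := h (o, z0) (⟨1, hp.one_lt⟩, z0)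
        rw [wrP_pow_apply] at hn
        have := congrArg Prod.fst hn
        rw [h1] at this
        simp only [one_pow, Equiv.Perm.one_apply] at this
        exact absurd (congrArg Fin.val this) (by simp [ho])
      refine ⟨hne, ?_⟩
      have hord : orderOf σ = p := orderOf_mem_zpowers hp hc hσ hne
      have hσp : σ ^ p = 1 := by
        have := pow_orderOf_eq_one σ; rwa [hord] at this
      have step : ∀ u, (x ^ p) (o, u) = (o, g u) := by
        intro u
        rw [hxdef, wrP_pow_apply, hσp]
        rfl
      have iter : ∀ (t : ℕ) (u), ((x ^ p) ^ t) (o, u) = (o, (g ^ t) u) := by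
        intro t
        induction t with
        | zero => intro u; simp
        | succ t ih =>
            intro u
            rw [pow_succ', Equiv.Perm.mul_apply, ih, step, pow_succ', Equiv.Perm.mul_apply]
      intro y z
      obtain ⟨n, hn⟩ := h (o, y) (o, z)
      rw [hxdef] at hn
      rw [wrP_pow_apply] at hn
      have h1 : (σ ^ n) o = o := congrArg Prod.fst hn
      have h2 : σ ^ n = 1 := fix_eq_one hc (Subgroup.pow_mem _ hσ _) h1
      have h3 : p ∣ n := by
        have := orderOf_dvd_of_pow_eq_one h2; rwa [hord] at this
      obtain ⟨t, rfl⟩ := h3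
      refine ⟨t, ?_⟩
      have h4 : (x ^ (p * t)) (o, y) = (o, z) := by
        rw [hxdef, wrP_pow_apply]; exact hn
      rw [pow_mul, iter] at h4
      exact congrArg Prod.snd h4
    · rintro ⟨hne, hg⟩
      have hord : orderOf σ = p := orderOf_mem_zpowers hp hc hσ hne
      have hσp : σ ^ p = 1 := by
        have := pow_orderOf_eq_one σ; rwa [hord] at this
      have hσfull : IsFullCycle σ := fullCycle_of_ne_one hp hc hσ hne
      have step : ∀ u, (x ^ p) (o, u) = (o, g u) := by
        intro u
        rw [hxdef, wrP_pow_apply, hσp]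
        rfl
      have iter : ∀ (t : ℕ) (u), ((x ^ p) ^ t) (o, u) = (o, (g ^ t) u) := by
        intro t
        induction t with
        | zero => intro u; simp
        | succ t ih =>
            intro u
            rw [pow_succ', Equiv.Perm.mul_apply, ih, step, pow_succ', Equiv.Perm.mul_apply]
      rintro ⟨j, y⟩ ⟨j', y'⟩
      obtain ⟨a, ha⟩ := hσfull j o
      obtain ⟨b, hb⟩ := hσfull o j'
      set u : Fin (p ^ (k - 1)) :=
        (((List.range a).map (fun i => f ((σ ^ i) j))).reverse.prod) y with hu
      set P : Perm (Fin (p ^ (k - 1))) :=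
        ((List.range b).map (fun i => f ((σ ^ i) o))).reverse.prod with hP
      have hxa : (x ^ a) (j, y) = (o, u) := by
        rw [hxdef, wrP_pow_apply, ha]
      have hxb : ∀ w, (x ^ b) (o, w) = (j', P w) := by
        intro w; rw [hxdef, wrP_pow_apply, hb]
      obtain ⟨t, ht⟩ := hg u (P⁻¹ y')
      refine ⟨b + (p * t + a), ?_⟩
      rw [pow_add, pow_add, Equiv.Perm.mul_apply, Equiv.Perm.mul_apply, hxa, pow_mul,
        iter, ht, hxb]
      simp
end
end

section
/- Let p be a prime, k ≥ 1, and l ∈ [k]. Let u = (u_1,…,u_k) ∈ {0,1}^k and let φ(u) be the corresponding linear character of P_{p^k} (with u_j = 1 iff the j-th component character is trivial). Then the sum of φ(u)(x) over all x ∈ P_{p^k} of cycle type a single p^l-cycle (all other points fixed) equals p^k · p^{(p^l−1)/(p−1) − 2l} · ∏_{m=1}^l (p u_m − 1). -/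
open scoped Classical
open Equiv

noncomputable section

/-- The underlying set of `p^k` points, realised as the `k`-fold product `(Fin p)^k`. -/
def Om (p : ℕ) : ℕ → Type
  | 0 => Unit
  | (k+1) => Fin p × Om p k

instance OmFintype (p : ℕ) : (k : ℕ) → Fintype (Om p k)
  | 0 => inferInstanceAs (Fintype Unit)
  | (k+1) => letI := OmFintype p k; inferInstanceAs (Fintype (Fin p × Om p k))

/-- The Sylow `p`-subgroup `P_{p^k} = P_p ≀ ⋯ ≀ P_p` of `S_{p^k}` (as a set of permutations),
where `P_p = ⟨c⟩`. -/
def Pset (p : ℕ) (c : Perm (Fin p)) : (k : ℕ) → Set (Perm (Om p k))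
  | 0 => {1}
  | (k+1) => {x | ∃ (f : Fin p → Perm (Om p k)) (σ : Perm (Fin p)),
      (∀ i, f i ∈ Pset p c k) ∧ σ ∈ Subgroup.zpowers c ∧ x = wrP f σ}

/-- The value of a linear character `χ` of `P_p = ⟨c⟩` at `σ`, extended by zero. -/
def topVal (p : ℕ) (c : Perm (Fin p)) (χ : ↥(Subgroup.zpowers c) →* ℂ)
    (σ : Perm (Fin p)) : ℂ :=
  if h : σ ∈ Subgroup.zpowers c then χ ⟨σ, h⟩ else 0

/-- The linear character `X(ψ_1,…,ψ_k)` of `P_{p^k}` determined by the linear characters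
`ψ_1,…,ψ_k` of `P_p`, extended by zero outside of the wreath product:
`X(ψ_1,…,ψ_{k+1})(f_1,…,f_p;σ) = ∏_j X(ψ_1,…,ψ_k)(f_j) · ψ_{k+1}(σ)`. -/
def XChar (p : ℕ) (c : Perm (Fin p)) :
    (k : ℕ) → (Fin k → (↥(Subgroup.zpowers c) →* ℂ)) → Perm (Om p k) → ℂ
  | 0, _, _ => 1
  | (k+1), ψ, x =>
      if h : ∃ fσ : (Fin p → Perm (Om p k)) × Perm (Fin p), x = wrP fσ.1 fσ.2 then
        (∏ j : Fin p, XChar p c k (fun i => ψ i.castSucc) (h.choose.1 j)) *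
          topVal p c (ψ (Fin.last k)) h.choose.2
      else 0

/-- Induction of the function `φ` from the subgroup (given as a set) `S` to the whole group. -/
def indSet {G : Type*} [Group G] [Fintype G] (S : Set G) (φ : G → ℂ) (g : G) : ℂ :=
  (Nat.card ↥S : ℂ)⁻¹ * ∑ x : G, if x⁻¹ * g * x ∈ S then φ (x⁻¹ * g * x) else 0

/-! Write `x ∈ P_{p^(k+1)}` as `wrP f σ = (f_1, …, f_p; σ)`. If `σ ≠ 1` then `x` moves every
point, so it has a single `p^l`-cycle only for `l = k + 1`; if `σ = 1` then `x` is block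
diagonal and is a single `p^l`-cycle exactly when one block is and the others are trivial. Hence
`Γ_{l;k+1} = p Γ_{l;k}` for `l ≤ k`, which reduces everything to `Γ_{l;l}`.

For full cycles, `wrP f σ` with `σ ≠ 1` is a full cycle iff the cycle product
`f (σ^(p-1) j) ⋯ f j` is one, and `X(wrP f σ) = X(cycle product) ψ(σ)`. Substituting the cycle
product for its last factor shows that the cycle product of a tuple in `P_{p^k}^p` is
equidistributed on `P_{p^k}`; summing `ψ` over `σ ≠ 1` then gives
`Γ_{k+1;k+1} = (p u_{k+1} - 1) |P_{p^k}|^(p-1) Γ_{k;k}`, and with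
`|P_{p^k}| = p^((p^k - 1)/(p - 1))` the recursion solves to the stated formula. -/

section Wreath

variable {ι α : Type*}

@[simp]
lemma wrP_apply (f : ι → Perm α) (σ : Perm ι) (x : ι × α) :
    wrP f σ x = (σ x.1, f x.1 x.2) := rfl

lemma wrP_mul (f g : ι → Perm α) (σ τ : Perm ι) :
    wrP f σ * wrP g τ = wrP (fun j => f (τ j) * g j) (σ * τ) := by
  ext ⟨j, y⟩ <;> rfl

lemma wrP_one : wrP (fun _ : ι => (1 : Perm α)) 1 = 1 := rfl

lemma wrP_inv (f : ι → Perm α) (σ : Perm ι) :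
    (wrP f σ)⁻¹ = wrP (fun j => (f (σ⁻¹ j))⁻¹) σ⁻¹ := by
  rw [inv_eq_iff_mul_eq_one, wrP_mul]
  simp_rw [mul_inv_cancel]
  exact wrP_one

lemma wrP_injective [Nonempty α] {f g : ι → Perm α} {σ τ : Perm ι}
    (h : wrP f σ = wrP g τ) : f = g ∧ σ = τ := by
  have h' (j : ι) (y : α) : (σ j, f j y) = (τ j, g j y) := DFunLike.congr_fun h (j, y)
  refine ⟨funext fun j => Equiv.ext fun y => congrArg Prod.snd (h' j y), ?_⟩
  obtain ⟨y⟩ := ‹Nonempty α›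
  exact Equiv.ext fun j => congrArg Prod.fst (h' j y)

/-- The second component of `wrP f σ ^ n` on the fibre over `j`. -/
def cycleProd (f : ι → Perm α) (σ : Perm ι) : ℕ → ι → Perm α
  | 0, _ => 1
  | (n+1), j => f ((σ ^ n) j) * cycleProd f σ n j

lemma wrP_pow (f : ι → Perm α) (σ : Perm ι) (n : ℕ) :
    wrP f σ ^ n = wrP (cycleProd f σ n) (σ ^ n) := by
  induction n with
  | zero => rfl
  | succ n ih => rw [pow_succ', ih, wrP_mul, pow_succ']; rfl

lemma cycleProd_add (f : ι → Perm α) (σ : Perm ι) (n m : ℕ) (j : ι) :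
    cycleProd f σ (n + m) j = cycleProd f σ n ((σ ^ m) j) * cycleProd f σ m j := by
  induction n with
  | zero => simp [cycleProd]
  | succ n ih =>
    rw [Nat.add_right_comm, cycleProd, cycleProd, ih, pow_add, mul_assoc, Perm.mul_apply]

lemma cycleProd_eq_mul_pred (f : ι → Perm α) (σ : Perm ι) {n : ℕ} (hn : n ≠ 0) (j : ι) :
    cycleProd f σ n j = f ((σ ^ (n - 1)) j) * cycleProd f σ (n - 1) j := by
  obtain ⟨n, rfl⟩ := Nat.exists_eq_succ_of_ne_zero hn
  rfl

lemma cycleProd_mul_eq_pow (f : ι → Perm α) {σ : Perm ι} {q : ℕ} (hq : σ ^ q = 1)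
    (m : ℕ) (j : ι) : cycleProd f σ (m * q) j = cycleProd f σ q j ^ m := by
  induction m with
  | zero => simp [cycleProd]
  | succ m ih => rw [Nat.succ_mul, cycleProd_add, hq, Perm.one_apply, ih, pow_succ]

lemma cycleProd_congr {f f' : ι → Perm α} {σ : Perm ι} {j : ι} {n : ℕ}
    (h : ∀ m < n, f ((σ ^ m) j) = f' ((σ ^ m) j)) : cycleProd f σ n j = cycleProd f' σ n j := by
  induction n with
  | zero => rfl
  | succ n ih =>
    rw [cycleProd, cycleProd, h n n.lt_succ_self, ih fun m hm => h m (hm.trans n.lt_succ_self)]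

lemma sameCycle_wrP (f : ι → Perm α) (σ : Perm ι) (n : ℕ) (x : ι × α) :
    (wrP f σ).SameCycle x ((σ ^ n) x.1, cycleProd f σ n x.1 x.2) := by
  rw [← wrP_apply, ← wrP_pow]
  exact Perm.SameCycle.refl _ _ |>.pow_right

lemma fst_eq_of_sameCycle_wrP_one [Finite ι] [Finite α] {f : ι → Perm α} {x y : ι × α}
    (h : (wrP f 1).SameCycle x y) : x.1 = y.1 := by
  obtain ⟨n, rfl⟩ := h.exists_nat_pow_eq
  simp [wrP_pow]

end Wreath

section BlockDiagonal

variable {ι α : Type*} [DecidableEq ι]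

def fibreEquiv (j : ι) : α ≃ {x : ι × α // x.1 = j} where
  toFun y := ⟨(j, y), rfl⟩
  invFun x := x.1.2
  left_inv _ := rfl
  right_inv := by rintro ⟨⟨i, y⟩, rfl⟩; rfl

lemma wrP_mulSingle_one (j : ι) (g : Perm α) :
    wrP (Pi.mulSingle j g) 1 = g.extendDomain (fibreEquiv j) := by
  ext ⟨i, y⟩ : 1
  by_cases hij : i = j
  · subst hij
    rw [Perm.extendDomain_apply_subtype g (fibreEquiv i) (b := (i, y)) rfl]
    simp [fibreEquiv]
  · rw [Perm.extendDomain_apply_not_subtype g (fibreEquiv j) (b := (i, y)) hij]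
    simp [Pi.mulSingle_eq_of_ne hij]

lemma cycleType_wrP_mulSingle_one [Fintype ι] [Fintype α] [DecidableEq α] (j : ι) (g : Perm α) :
    (wrP (Pi.mulSingle j g) 1).cycleType = g.cycleType := by
  rw [wrP_mulSingle_one, Perm.cycleType_extendDomain]

lemma eq_mulSingle_of_isCycle_wrP_one [Finite ι] [Finite α] {f : ι → Perm α}
    (h : (wrP f 1).IsCycle) : ∃ j, f = Pi.mulSingle j (f j) := by
  obtain ⟨⟨j, y⟩, -, hcyc⟩ := h
  refine ⟨j, funext fun i => ?_⟩
  by_cases hij : i = j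
  · subst hij; simp
  rw [Pi.mulSingle_eq_of_ne hij]
  by_contra hfi
  obtain ⟨z, hz⟩ := not_forall.mp (mt Perm.ext hfi)
  exact hij (fst_eq_of_sameCycle_wrP_one (hcyc (y := (i, z)) (by simpa using hz))).symm

end BlockDiagonal

section FullCycle

variable {α : Type*} {x : Perm α}

lemma isFullCycle_iff_forall_sameCycle [Finite α] :
    IsFullCycle x ↔ ∀ a b, x.SameCycle a b :=
  ⟨fun h a b => let ⟨n, hn⟩ := h a b; ⟨n, by simpa using hn⟩,
    fun h a b => (h a b).exists_nat_pow_eq⟩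

lemma IsFullCycle.apply_ne [Nontrivial α] (h : IsFullCycle x) (a : α) : x a ≠ a := by
  intro ha
  obtain ⟨b, hb⟩ := exists_ne a
  obtain ⟨n, hn⟩ := h a b
  exact hb (hn ▸ Perm.pow_apply_eq_self_of_apply_eq_self ha n)

lemma IsFullCycle.isCycle [Nontrivial α] (h : IsFullCycle x) : x.IsCycle := by
  obtain ⟨a⟩ := ‹Nontrivial α›.to_nonempty
  exact ⟨a, h.apply_ne a, fun b _ => let ⟨n, hn⟩ := h a b; ⟨n, by simpa using hn⟩⟩

lemma IsFullCycle.support_eq_univ [Fintype α] [DecidableEq α] [Nontrivial α]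
    (h : IsFullCycle x) : x.support = Finset.univ :=
  Finset.eq_univ_of_forall fun a => Perm.mem_support.mpr (h.apply_ne a)

lemma IsFullCycle.orderOf_eq [Fintype α] [Nontrivial α] (h : IsFullCycle x) :
    orderOf x = Fintype.card α := by
  classical
  rw [h.isCycle.orderOf, h.support_eq_univ, Finset.card_univ]

lemma isFullCycle_iff_cycleType [Fintype α] [DecidableEq α] [Nontrivial α] :
    IsFullCycle x ↔ x.cycleType = {Fintype.card α} := by
  refine ⟨fun h => by rw [h.isCycle.cycleType, h.support_eq_univ, Finset.card_univ], fun h => ?_⟩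
  have hcyc : x.IsCycle := Perm.card_cycleType_eq_one.mp (by simp [h])
  have hsupp : x.support = Finset.univ :=
    Finset.eq_univ_of_card _ (by simpa [h] using (Perm.sum_cycleType x).symm)
  have hmoved (a : α) : x a ≠ a := Perm.mem_support.mp (hsupp ▸ Finset.mem_univ a)
  exact isFullCycle_iff_forall_sameCycle.mpr fun a b => hcyc.sameCycle (hmoved a) (hmoved b)

end FullCycle

section CyclicTop

variable {p : ℕ} {c σ : Perm (Fin p)}

lemma IsFullCycle.orderOf_eq_prime (hp : p.Prime) (hc : IsFullCycle c) : orderOf c = p := by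
  have : Nontrivial (Fin p) := Fin.nontrivial_iff_two_le.mpr hp.two_le
  rw [hc.orderOf_eq, Fintype.card_fin]

lemma IsFullCycle.of_mem_zpowers (hp : p.Prime) (hc : IsFullCycle c)
    (hσ : σ ∈ Subgroup.zpowers c) (hσ1 : σ ≠ 1) : IsFullCycle σ := by
  obtain ⟨m, rfl : c ^ m = σ⟩ := mem_powers_iff_mem_zpowers.mpr hσ
  have hord := hc.orderOf_eq_prime hp
  have hndvd : ¬ p ∣ m := by
    rintro ⟨t, rfl⟩
    exact hσ1 (by rw [pow_mul, orderOf_dvd_iff_pow_eq_one.mp (dvd_of_eq hord), one_pow])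
  have hcop : m.Coprime (orderOf c) := by
    rw [hord]; exact Nat.coprime_comm.mp ((hp.coprime_iff_not_dvd).mpr hndvd)
  obtain ⟨m', hm'⟩ := exists_pow_eq_self_of_coprime hcop
  intro a b
  obtain ⟨n, hn⟩ := hc a b
  exact ⟨m' * n, by rw [pow_mul, hm', hn]⟩

lemma pow_prime_eq_one_of_mem_zpowers (hp : p.Prime) (hc : IsFullCycle c)
    (hσ : σ ∈ Subgroup.zpowers c) : σ ^ p = 1 :=
  orderOf_dvd_iff_pow_eq_one.mp
    ((orderOf_dvd_of_mem_zpowers hσ).trans (dvd_of_eq (hc.orderOf_eq_prime hp)))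

lemma dvd_of_pow_apply_eq_self (hp : p.Prime) (hc : IsFullCycle c)
    (hσ : σ ∈ Subgroup.zpowers c) (hσ1 : σ ≠ 1) {n : ℕ} {j : Fin p} (h : (σ ^ n) j = j) :
    p ∣ n := by
  have : Nontrivial (Fin p) := Fin.nontrivial_iff_two_le.mpr hp.two_le
  have hσc := hc.of_mem_zpowers hp hσ hσ1
  by_contra hndvd
  have hσn : σ ^ n ≠ 1 := fun h1 =>
    hndvd ((dvd_of_eq (hσc.orderOf_eq_prime hp).symm).trans (orderOf_dvd_of_pow_eq_one h1))
  exact (hc.of_mem_zpowers hp (pow_mem hσ n) hσn).apply_ne j h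

lemma pow_apply_injective (hp : p.Prime) (hc : IsFullCycle c)
    (hσ : σ ∈ Subgroup.zpowers c) (hσ1 : σ ≠ 1) (j : Fin p) :
    Function.Injective fun m : Fin p => (σ ^ (m : ℕ)) j := by
  intro m m' hmm
  wlog hle : (m : ℕ) ≤ m' generalizing m m'
  · exact (this hmm.symm (le_of_not_ge hle)).symm
  have hfix : (σ ^ ((m' : ℕ) - m)) ((σ ^ (m : ℕ)) j) = (σ ^ (m : ℕ)) j := by
    rw [← Perm.mul_apply, ← pow_add, Nat.sub_add_cancel hle]; exact hmm.symm
  have := Nat.eq_zero_of_dvd_of_lt (dvd_of_pow_apply_eq_self hp hc hσ hσ1 hfix) (by omega)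
  exact Fin.ext (by omega)

lemma pow_apply_ne_pow_pred_apply (hp : p.Prime) (hc : IsFullCycle c)
    (hσ : σ ∈ Subgroup.zpowers c) (hσ1 : σ ≠ 1) (j : Fin p) {m : ℕ} (hm : m < p - 1) :
    (σ ^ m) j ≠ (σ ^ (p - 1)) j := fun h => by
  have := congrArg Fin.val (pow_apply_injective hp hc hσ hσ1 j
    (a₁ := ⟨m, by omega⟩) (a₂ := ⟨p - 1, by omega⟩) h)
  simp only at this
  omega

end CyclicTop

section WreathFullCycle

variable {p : ℕ} {α : Type*} {c σ : Perm (Fin p)}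

lemma isFullCycle_wrP_iff [Finite α] (hp : p.Prime) (hc : IsFullCycle c)
    (hσ : σ ∈ Subgroup.zpowers c) (hσ1 : σ ≠ 1) (f : Fin p → Perm α) (j₀ : Fin p) :
    IsFullCycle (wrP f σ) ↔ IsFullCycle (cycleProd f σ p j₀) := by
  have hσp := pow_prime_eq_one_of_mem_zpowers hp hc hσ
  rw [isFullCycle_iff_forall_sameCycle, isFullCycle_iff_forall_sameCycle]
  constructor
  · intro h y y'
    obtain ⟨n, hn⟩ := (h (j₀, y) (j₀, y')).exists_nat_pow_eq
    rw [wrP_pow] at hn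
    obtain ⟨m, rfl⟩ := dvd_of_pow_apply_eq_self hp hc hσ hσ1 (congrArg Prod.fst hn)
    have hy' : (cycleProd f σ p j₀ ^ m) y = y' := by
      rw [← cycleProd_mul_eq_pow f hσp, mul_comm]; exact congrArg Prod.snd hn
    exact hy' ▸ (Perm.SameCycle.refl _ _).pow_right
  · intro h x x'
    -- every point shares its cycle with a point over `j₀`, and over `j₀` the power
    -- `wrP f σ ^ p` acts as `cycleProd f σ p j₀`
    have hbase (x : Fin p × α) : ∃ y, (wrP f σ).SameCycle x (j₀, y) := by
      obtain ⟨a, ha⟩ := hc.of_mem_zpowers hp hσ hσ1 x.1 j₀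
      exact ⟨_, ha ▸ sameCycle_wrP f σ a x⟩
    have hfibre (y y' : α) : (wrP f σ).SameCycle (j₀, y) (j₀, y') := by
      obtain ⟨m, rfl⟩ := (h y y').exists_nat_pow_eq
      simpa [pow_mul', hσp, cycleProd_mul_eq_pow f hσp] using sameCycle_wrP f σ (m * p) (j₀, y)
    obtain ⟨y, hy⟩ := hbase x
    obtain ⟨y', hy'⟩ := hbase x'
    exact hy.trans ((hfibre y y').trans hy'.symm)

lemma not_isFullCycle_wrP_one [Nonempty α] (hp : 2 ≤ p) (f : Fin p → Perm α) :
    ¬ IsFullCycle (wrP f 1) := by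
  intro h
  obtain ⟨y⟩ := ‹Nonempty α›
  obtain ⟨n, hn⟩ := h (⟨0, by omega⟩, y) (⟨1, by omega⟩, y)
  simp [wrP_pow] at hn

lemma wrP_apply_ne_self (hp : p.Prime) (hc : IsFullCycle c) (hσ : σ ∈ Subgroup.zpowers c)
    (hσ1 : σ ≠ 1) (f : Fin p → Perm α) (x : Fin p × α) : wrP f σ x ≠ x := by
  have : Nontrivial (Fin p) := Fin.nontrivial_iff_two_le.mpr hp.two_le
  exact fun h => (hc.of_mem_zpowers hp hσ hσ1).apply_ne x.1 (congrArg Prod.fst h)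

end WreathFullCycle

lemma sum_pi_ite_forall_mem {ι β : Type*} [Fintype ι] [DecidableEq ι] [Fintype β] (S : Set β)
    [DecidablePred (· ∈ S)] (i₀ : ι) (G : β → ℂ) :
    ∑ h : ι → β, (if ∀ i, h i ∈ S then G (h i₀) else 0) =
      (Nat.card S : ℂ) ^ (Fintype.card ι - 1) * ∑ b, if b ∈ S then G b else 0 := by
  let φ : ι → β → ℂ := fun i b => if b ∈ S then (if i = i₀ then G b else 1) else 0
  have hterm (h : ι → β) : (if ∀ i, h i ∈ S then G (h i₀) else 0) = ∏ i, φ i (h i) := by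
    rw [Finset.prod_ite_zero, Finset.prod_ite_eq' Finset.univ i₀ fun i => G (h i)]
    simp
  have hfactor (i : ι) (hi : i ≠ i₀) : ∑ b, φ i b = Nat.card S := by
    simp [φ, hi, Finset.sum_boole, Nat.card_eq_fintype_card, Fintype.card_subtype]
  simp_rw [hterm, ← Fintype.prod_sum]
  rw [Fintype.prod_eq_mul_prod_compl i₀, mul_comm,
    Finset.prod_congr rfl fun i hi => hfactor i (Finset.mem_compl.mp hi ∘ Finset.mem_singleton.mpr),
    Finset.prod_const, Finset.card_compl, Finset.card_singleton]
  simp [φ]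

section Sylow

variable {p : ℕ} {c : Perm (Fin p)}

lemma Om_nonempty (hp : 0 < p) : ∀ k, Nonempty (Om p k)
  | 0 => ⟨()⟩
  | k + 1 => let ⟨y⟩ := Om_nonempty hp k; ⟨((⟨0, hp⟩ : Fin p), y)⟩

lemma card_Om : ∀ k, Fintype.card (Om p k) = p ^ k
  | 0 => rfl
  | k + 1 => by
    change Fintype.card (Fin p × Om p k) = _
    rw [Fintype.card_prod, Fintype.card_fin, card_Om k, pow_succ']

/-- `wrP` typed as a permutation of `Om p (k + 1)`, so that rewriting never has to see through
the definition of `Om`. -/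
def wrOm {k : ℕ} (f : Fin p → Perm (Om p k)) (σ : Perm (Fin p)) : Perm (Om p (k + 1)) := wrP f σ

lemma wrOm_one {k : ℕ} : wrOm (fun _ => (1 : Perm (Om p k))) 1 = 1 := wrP_one

lemma wrOm_mul {k : ℕ} (f g : Fin p → Perm (Om p k)) (σ τ : Perm (Fin p)) :
    wrOm f σ * wrOm g τ = wrOm (fun j => f (τ j) * g j) (σ * τ) := wrP_mul f g σ τ

lemma mem_Pset_succ_iff {k : ℕ} {x : Perm (Om p (k + 1))} :
    x ∈ Pset p c (k + 1) ↔ ∃ (f : Fin p → Perm (Om p k)) (σ : Perm (Fin p)),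
      (∀ i, f i ∈ Pset p c k) ∧ σ ∈ Subgroup.zpowers c ∧ x = wrOm f σ := Iff.rfl

lemma wrOm_injective (hp : 0 < p) {k : ℕ} {f g : Fin p → Perm (Om p k)} {σ τ : Perm (Fin p)}
    (h : wrOm f σ = wrOm g τ) : f = g ∧ σ = τ :=
  have := Om_nonempty hp k
  wrP_injective h

lemma one_mem_Pset : ∀ k, (1 : Perm (Om p k)) ∈ Pset p c k
  | 0 => rfl
  | k + 1 => ⟨fun _ => 1, 1, fun _ => one_mem_Pset k, one_mem _, wrOm_one.symm⟩

lemma mul_mem_Pset : ∀ {k} {x y : Perm (Om p k)},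
    x ∈ Pset p c k → y ∈ Pset p c k → x * y ∈ Pset p c k
  | 0, _, _, rfl, rfl => rfl
  | _ + 1, _, _, ⟨_, _, hf, hσ, rfl⟩, ⟨_, _, hg, hτ, rfl⟩ =>
    ⟨_, _, fun _ => mul_mem_Pset (hf _) (hg _), mul_mem hσ hτ, wrOm_mul _ _ _ _⟩

lemma inv_mem_Pset : ∀ {k} {x : Perm (Om p k)}, x ∈ Pset p c k → x⁻¹ ∈ Pset p c k
  | 0, _, rfl => rfl
  | _ + 1, _, ⟨_, _, hf, hσ, rfl⟩ =>
    ⟨_, _, fun _ => inv_mem_Pset (hf _), inv_mem hσ, wrP_inv _ _⟩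

lemma cycleProd_mem_Pset {k n : ℕ} {f : Fin p → Perm (Om p k)} {σ : Perm (Fin p)} {j : Fin p}
    (hf : ∀ m < n, f ((σ ^ m) j) ∈ Pset p c k) : cycleProd f σ n j ∈ Pset p c k := by
  induction n with
  | zero => exact one_mem_Pset k
  | succ n ih =>
    exact mul_mem_Pset (hf n n.lt_succ_self) (ih fun m hm => hf m (hm.trans n.lt_succ_self))

lemma wrOm_mem_Pset_iff (hp : 0 < p) {k : ℕ} {f : Fin p → Perm (Om p k)} {σ : Perm (Fin p)} :
    wrOm f σ ∈ Pset p c (k + 1) ↔ (∀ i, f i ∈ Pset p c k) ∧ σ ∈ Subgroup.zpowers c := by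
  refine ⟨fun ⟨g, τ, hg, hτ, h⟩ => ?_, fun ⟨hf, hσ⟩ => ⟨f, σ, hf, hσ, rfl⟩⟩
  obtain ⟨rfl, rfl⟩ := wrOm_injective hp h
  exact ⟨hg, hτ⟩

lemma card_Pset (hp : p.Prime) (hc : IsFullCycle c) :
    ∀ k, Nat.card (Pset p c k) = p ^ ∑ i ∈ Finset.range k, p ^ i
  | 0 => by simp [Pset]
  | k + 1 => by
    let e : (Fin p → Pset p c k) × Subgroup.zpowers c → Pset p c (k + 1) := fun fσ =>
      ⟨wrOm (fun i => fσ.1 i) fσ.2, (wrOm_mem_Pset_iff hp.pos).mpr ⟨fun i => (fσ.1 i).2, fσ.2.2⟩⟩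
    have he : Function.Bijective e := by
      refine ⟨fun ⟨f, σ⟩ ⟨g, τ⟩ h => ?_,
        fun ⟨_, f, σ, hf, hσ, hx⟩ => ⟨(fun i => ⟨f i, hf i⟩, ⟨σ, hσ⟩), Subtype.ext hx.symm⟩⟩
      have h' : wrOm (fun i => (f i : Perm (Om p k))) σ = wrOm (fun i => g i) τ :=
        Subtype.ext_iff.mp h
      obtain ⟨hfg, hστ⟩ := wrOm_injective hp.pos h'
      simp only [Prod.mk.injEq]
      exact ⟨funext fun i => Subtype.ext (congrFun hfg i), Subtype.ext hστ⟩
    rw [← Nat.card_eq_of_bijective e he, Nat.card_prod, Nat.card_fun, Nat.card_zpowers,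
      hc.orderOf_eq_prime hp, Nat.card_eq_fintype_card (α := Fin p), Fintype.card_fin,
      card_Pset hp hc k, ← pow_mul, ← pow_succ, geom_sum_succ, mul_comm p]

lemma sum_Om_succ (hp : 0 < p) {k : ℕ} (F : Perm (Om p (k + 1)) → ℂ)
    (hF : ∀ x ∉ Pset p c (k + 1), F x = 0) :
    ∑ x, F x = ∑ σ : Perm (Fin p), ∑ f : Fin p → Perm (Om p k), F (wrOm f σ) := by
  let W : Perm (Fin p) × (Fin p → Perm (Om p k)) → Perm (Om p (k + 1)) := fun σf => wrOm σf.2 σf.1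
  have hW : Set.InjOn W Set.univ := by
    rintro ⟨σ, f⟩ - ⟨τ, g⟩ - h
    obtain ⟨rfl, rfl⟩ := wrOm_injective hp h
    rfl
  rw [← Fintype.sum_prod_type']
  symm
  refine Finset.sum_of_injOn W (by simpa using hW) (fun _ _ => by simp) ?_ fun _ _ => rfl
  intro x _ hx
  exact hF x fun ⟨f, σ, _, _, hfσ⟩ => hx ⟨(σ, f), by simp, hfσ.symm⟩

lemma cycleType_wrOm_ne_singleton (hp : p.Prime) (hc : IsFullCycle c) {σ : Perm (Fin p)}
    (hσ : σ ∈ Subgroup.zpowers c) (hσ1 : σ ≠ 1) {k l : ℕ} (hl : l ≤ k)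
    (f : Fin p → Perm (Om p k)) : (wrOm f σ).cycleType ≠ {p ^ l} := by
  intro h
  have hsupp : (wrOm f σ).support = Finset.univ :=
    Finset.eq_univ_of_forall fun x => Perm.mem_support.mpr (wrP_apply_ne_self hp hc hσ hσ1 f x)
  have hcard := Perm.sum_cycleType (wrOm f σ)
  rw [h, hsupp, Finset.card_univ, card_Om, Multiset.sum_singleton] at hcard
  have := Nat.pow_right_injective hp.two_le hcard
  omega

lemma wrOm_mulSingle_one_mem_Pset_iff (hp : 0 < p) {k : ℕ} (j : Fin p) (g : Perm (Om p k)) :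
    wrOm (Pi.mulSingle j g) 1 ∈ Pset p c (k + 1) ↔ g ∈ Pset p c k := by
  rw [wrOm_mem_Pset_iff hp]
  refine ⟨fun h => by simpa using h.1 j, fun hg => ⟨fun i => ?_, one_mem _⟩⟩
  by_cases hij : i = j
  · subst hij; simpa using hg
  · rw [Pi.mulSingle_eq_of_ne hij]; exact one_mem_Pset k

lemma cycleType_wrOm_mulSingle_one {k : ℕ} (j : Fin p) (g : Perm (Om p k)) :
    (wrOm (Pi.mulSingle j g) 1).cycleType = g.cycleType := by
  -- the two sides use the instances of `Om p (k + 1)` and of `Fin p × Om p k` respectively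
  have hinst (F₁ F₂ : Fintype (Om p (k + 1))) (D₁ D₂ : DecidableEq (Om p (k + 1)))
      (x : Perm (Om p (k + 1))) : @Perm.cycleType _ F₁ D₁ x = @Perm.cycleType _ F₂ D₂ x := by
    congr!
  exact (hinst _ _ _ _ _).trans (cycleType_wrP_mulSingle_one j g)

end Sylow

section LastFactorSubstitution

variable {p : ℕ} {c σ : Perm (Fin p)}

/-- Replaces the last factor `f (σ ^ (p - 1) j₀)` of `cycleProd f σ p j₀` by the whole product. -/
def substLast {α : Type*} (σ : Perm (Fin p)) (j₀ : Fin p) (f : Fin p → Perm α) :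
    Fin p → Perm α :=
  Function.update f ((σ ^ (p - 1)) j₀) (cycleProd f σ p j₀)

lemma substLast_injective {α : Type*} (hp : p.Prime) (hc : IsFullCycle c)
    (hσ : σ ∈ Subgroup.zpowers c) (hσ1 : σ ≠ 1) (j₀ : Fin p) :
    Function.Injective (substLast (α := α) σ j₀) := by
  intro f f' h
  have hoff (i : Fin p) (hi : i ≠ (σ ^ (p - 1)) j₀) : f i = f' i := by
    simpa [substLast, Function.update_of_ne hi] using congrFun h i
  have hlast := congrFun h ((σ ^ (p - 1)) j₀)
  simp only [substLast, Function.update_self, cycleProd_eq_mul_pred _ _ hp.ne_zero] at hlast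
  rw [cycleProd_congr fun m hm => hoff _ (pow_apply_ne_pow_pred_apply hp hc hσ hσ1 j₀ hm)]
    at hlast
  funext i
  by_cases hi : i = (σ ^ (p - 1)) j₀
  · rw [hi]; exact mul_right_cancel hlast
  · exact hoff i hi

lemma forall_substLast_mem_Pset_iff (hp : p.Prime) (hc : IsFullCycle c)
    (hσ : σ ∈ Subgroup.zpowers c) (hσ1 : σ ≠ 1) {k : ℕ} (f : Fin p → Perm (Om p k))
    (j₀ : Fin p) : (∀ i, substLast σ j₀ f i ∈ Pset p c k) ↔ ∀ i, f i ∈ Pset p c k := by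
  set i₀ := (σ ^ (p - 1)) j₀
  have hoff (i : Fin p) (hi : i ≠ i₀) : substLast σ j₀ f i = f i := Function.update_of_ne hi _ _
  have hlast : substLast σ j₀ f i₀ = f i₀ * cycleProd f σ (p - 1) j₀ := by
    rw [substLast, Function.update_self, cycleProd_eq_mul_pred _ _ hp.ne_zero]
  refine ⟨fun h i => ?_, fun h i => ?_⟩ <;> by_cases hi : i = i₀
  · have hpre : cycleProd f σ (p - 1) j₀ ∈ Pset p c k := cycleProd_mem_Pset fun m hm =>
      hoff _ (pow_apply_ne_pow_pred_apply hp hc hσ hσ1 j₀ hm) ▸ h _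
    rw [hi, ← mul_inv_cancel_right (f i₀) (cycleProd f σ (p - 1) j₀), ← hlast]
    exact mul_mem_Pset (h i₀) (inv_mem_Pset hpre)
  · exact hoff i hi ▸ h i
  · rw [hi, hlast]
    exact mul_mem_Pset (h i₀) (cycleProd_mem_Pset fun m _ => h _)
  · exact (hoff i hi).symm ▸ h i

/-- By the substitution `substLast`, the cycle product of a tuple in `(P_{p^k})^p` is
equidistributed on `P_{p^k}`. -/
lemma sum_pi_Pset_cycleProd (hp : p.Prime) (hc : IsFullCycle c) (hσ : σ ∈ Subgroup.zpowers c)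
    (hσ1 : σ ≠ 1) (k : ℕ) (j₀ : Fin p) (G : Perm (Om p k) → ℂ) :
    ∑ f : Fin p → Perm (Om p k), (if ∀ i, f i ∈ Pset p c k then G (cycleProd f σ p j₀) else 0) =
      (Nat.card (Pset p c k) : ℂ) ^ (p - 1) * ∑ g, if g ∈ Pset p c k then G g else 0 := by
  have hsum := sum_pi_ite_forall_mem (Pset p c k) ((σ ^ (p - 1)) j₀) G
  rw [Fintype.card_fin] at hsum
  rw [← hsum]
  refine Fintype.sum_bijective (substLast σ j₀)
    (Finite.injective_iff_bijective.mp (substLast_injective hp hc hσ hσ1 j₀)) _ _ fun f => ?_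
  simp only [forall_substLast_mem_Pset_iff hp hc hσ hσ1]
  simp only [substLast, Function.update_self]

end LastFactorSubstitution

section Character

variable {p : ℕ} {c : Perm (Fin p)}

lemma topVal_of_mem (χ : Subgroup.zpowers c →* ℂ) {σ : Perm (Fin p)}
    (h : σ ∈ Subgroup.zpowers c) : topVal p c χ σ = χ ⟨σ, h⟩ := dif_pos h

lemma topVal_one (χ : Subgroup.zpowers c →* ℂ) : topVal p c χ 1 = 1 :=
  (topVal_of_mem χ (one_mem _)).trans (map_one χ)

lemma topVal_mul (χ : Subgroup.zpowers c →* ℂ) {σ τ : Perm (Fin p)}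
    (hσ : σ ∈ Subgroup.zpowers c) (hτ : τ ∈ Subgroup.zpowers c) :
    topVal p c χ (σ * τ) = topVal p c χ σ * topVal p c χ τ := by
  rw [topVal_of_mem χ hσ, topVal_of_mem χ hτ, topVal_of_mem χ (mul_mem hσ hτ), ← map_mul]
  rfl

lemma sum_topVal_ne_one (hp : p.Prime) (hc : IsFullCycle c) (χ : Subgroup.zpowers c →* ℂ) :
    ∑ σ : Perm (Fin p), (if σ ∈ Subgroup.zpowers c ∧ σ ≠ 1 then topVal p c χ σ else 0) =
      (if χ = 1 then (p : ℂ) else 0) - 1 := by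
  have hsplit (σ : Perm (Fin p)) : (if σ ∈ Subgroup.zpowers c then topVal p c χ σ else 0) =
      (if σ ∈ Subgroup.zpowers c ∧ σ ≠ 1 then topVal p c χ σ else 0) +
        if σ = 1 then topVal p c χ σ else 0 := by
    by_cases h1 : σ = 1
    · simp [h1, one_mem]
    · simp [h1]
  have hsub : ∑ σ : Perm (Fin p), (if σ ∈ Subgroup.zpowers c then topVal p c χ σ else 0) =
      ∑ s : Subgroup.zpowers c, χ s := by
    rw [← Finset.sum_filter, Finset.sum_subtype _ (p := (· ∈ Subgroup.zpowers c)) (by simp)]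
    exact Finset.sum_congr rfl fun s _ => topVal_of_mem χ s.2
  calc _ = ∑ σ : Perm (Fin p), (if σ ∈ Subgroup.zpowers c then topVal p c χ σ else 0) - 1 := by
        rw [eq_sub_iff_add_eq, ← topVal_one χ]
        simp_rw [hsplit]
        rw [Finset.sum_add_distrib, Fintype.sum_ite_eq']
    _ = _ := by
        rw [hsub, sum_hom_units, ← Nat.card_eq_fintype_card, Nat.card_zpowers,
          hc.orderOf_eq_prime hp]
        push_cast
        rfl

lemma XChar_wrOm (hp : 0 < p) {k : ℕ} (ψ : Fin (k + 1) → (Subgroup.zpowers c →* ℂ))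
    (f : Fin p → Perm (Om p k)) (σ : Perm (Fin p)) :
    XChar p c (k + 1) ψ (wrOm f σ) =
      (∏ j, XChar p c k (fun i => ψ i.castSucc) (f j)) * topVal p c (ψ (Fin.last k)) σ := by
  have hex : ∃ fσ : (Fin p → Perm (Om p k)) × Perm (Fin p), wrOm f σ = wrP fσ.1 fσ.2 :=
    ⟨(f, σ), rfl⟩
  obtain ⟨hf, hσ⟩ := wrOm_injective hp hex.choose_spec
  exact (XChar.eq_2 _ _ _ _ _).trans ((dif_pos hex).trans (hf ▸ hσ ▸ rfl))

lemma XChar_one (hp : 0 < p) :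
    ∀ k (ψ : Fin k → (Subgroup.zpowers c →* ℂ)), XChar p c k ψ 1 = 1
  | 0, _ => rfl
  | k + 1, ψ => by
    rw [← wrOm_one, XChar_wrOm hp, topVal_one, mul_one]
    exact Finset.prod_eq_one fun j _ => XChar_one hp k _

lemma XChar_mul (hp : 0 < p) : ∀ k (ψ : Fin k → (Subgroup.zpowers c →* ℂ))
    {x y : Perm (Om p k)}, x ∈ Pset p c k → y ∈ Pset p c k →
    XChar p c k ψ (x * y) = XChar p c k ψ x * XChar p c k ψ y
  | 0, _, _, _, _, _ => (mul_one 1).symm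
  | k + 1, ψ, x, y, hx, hy => by
    obtain ⟨f, σ, hf, hσ, rfl⟩ := mem_Pset_succ_iff.mp hx
    obtain ⟨g, τ, hg, hτ, rfl⟩ := mem_Pset_succ_iff.mp hy
    rw [wrOm_mul, XChar_wrOm hp, XChar_wrOm hp, XChar_wrOm hp, topVal_mul _ hσ hτ]
    simp only [XChar_mul hp k _ (hf _) (hg _), Finset.prod_mul_distrib]
    rw [Equiv.prod_comp τ fun j => XChar p c k (fun i => ψ i.castSucc) (f j)]
    ring

lemma XChar_cycleProd (hp : 0 < p) {k : ℕ} (ψ : Fin k → (Subgroup.zpowers c →* ℂ))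
    {f : Fin p → Perm (Om p k)} (hf : ∀ i, f i ∈ Pset p c k) (σ : Perm (Fin p)) (n : ℕ)
    (j : Fin p) :
    XChar p c k ψ (cycleProd f σ n j) = ∏ m ∈ Finset.range n, XChar p c k ψ (f ((σ ^ m) j)) := by
  induction n with
  | zero => exact XChar_one hp k ψ
  | succ n ih =>
    rw [cycleProd, XChar_mul hp k ψ (hf _) (cycleProd_mem_Pset fun m _ => hf _), ih,
      Finset.prod_range_succ, mul_comm]

/-- Over a full orbit of `σ` the cycle product picks up every factor once. -/
lemma XChar_cycleProd_prime (hp : p.Prime) (hc : IsFullCycle c) {σ : Perm (Fin p)}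
    (hσ : σ ∈ Subgroup.zpowers c) (hσ1 : σ ≠ 1) {k : ℕ}
    (ψ : Fin k → (Subgroup.zpowers c →* ℂ)) {f : Fin p → Perm (Om p k)}
    (hf : ∀ i, f i ∈ Pset p c k) (j : Fin p) :
    XChar p c k ψ (cycleProd f σ p j) = ∏ i, XChar p c k ψ (f i) := by
  rw [XChar_cycleProd hp.pos ψ hf,
    ← Fin.prod_univ_eq_prod_range (fun m => XChar p c k ψ (f ((σ ^ m) j)))]
  exact Function.Bijective.prod_comp
    (Finite.injective_iff_bijective.mp (pow_apply_injective hp hc hσ hσ1 j))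
    fun i => XChar p c k ψ (f i)

lemma XChar_wrOm_seq (ψ : ℕ → (Subgroup.zpowers c →* ℂ)) (hp : 0 < p) {k : ℕ}
    (f : Fin p → Perm (Om p k)) (σ : Perm (Fin p)) :
    XChar p c (k + 1) (fun i => ψ i) (wrOm f σ) =
      (∏ j, XChar p c k (fun i => ψ i) (f j)) * topVal p c (ψ k) σ :=
  XChar_wrOm hp _ f σ

lemma XChar_wrOm_mulSingle_one (ψ : ℕ → (Subgroup.zpowers c →* ℂ)) (hp : 0 < p) {k : ℕ}
    (j : Fin p) (g : Perm (Om p k)) :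
    XChar p c (k + 1) (fun i => ψ i) (wrOm (Pi.mulSingle j g) 1) =
      XChar p c k (fun i => ψ i) g := by
  rw [XChar_wrOm_seq ψ hp, topVal_one, mul_one, Fintype.prod_eq_single j fun i hij => ?_]
  · simp
  · rw [Pi.mulSingle_eq_of_ne hij, XChar_one hp]

end Character

section CycleTypeSum

variable {p : ℕ} {c : Perm (Fin p)} (ψ : ℕ → (Subgroup.zpowers c →* ℂ))

/-- `Γ_{l;k}`, for the character `X(ψ_0, …, ψ_{k-1})` of `P_{p^k}`. The characters form one
sequence indexed by `ℕ`, so that the recursion in `k` keeps `ψ` fixed. -/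
def cycleTypeSum (k l : ℕ) : ℂ :=
  ∑ x : Perm (Om p k),
    if x ∈ Pset p c k ∧ x.cycleType = {p ^ l} then XChar p c k (fun i => ψ i) x else 0

lemma sum_wrOm_one_cycleType (hp : 0 < p) (k l : ℕ) :
    ∑ f : Fin p → Perm (Om p k),
      (if wrOm f 1 ∈ Pset p c (k + 1) ∧ (wrOm f 1).cycleType = {p ^ l} then
        XChar p c (k + 1) (fun i => ψ i) (wrOm f 1) else 0) = p * cycleTypeSum ψ k l := by
  have hval (j : Fin p) (g : Perm (Om p k)) :
      (if wrOm (Pi.mulSingle j g) 1 ∈ Pset p c (k + 1) ∧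
          (wrOm (Pi.mulSingle j g) 1).cycleType = {p ^ l} then
        XChar p c (k + 1) (fun i => ψ i) (wrOm (Pi.mulSingle j g) 1) else 0) =
      if g ∈ Pset p c k ∧ g.cycleType = {p ^ l} then XChar p c k (fun i => ψ i) g else 0 := by
    rw [XChar_wrOm_mulSingle_one ψ hp, wrOm_mulSingle_one_mem_Pset_iff hp,
      cycleType_wrOm_mulSingle_one]
  have hsum : (p : ℂ) * cycleTypeSum ψ k l = ∑ jg : Fin p × Perm (Om p k),
      if jg.2 ∈ Pset p c k ∧ jg.2.cycleType = {p ^ l} then XChar p c k (fun i => ψ i) jg.2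
      else 0 := by
    simp [cycleTypeSum, Fintype.sum_prod_type]
  rw [hsum]
  symm
  refine Finset.sum_bij_ne_zero (fun jg _ _ => Pi.mulSingle jg.1 jg.2)
    (fun _ _ _ => Finset.mem_univ _) ?_ ?_ fun ⟨j, g⟩ _ _ => (hval j g).symm
  · rintro ⟨j, g⟩ - hg ⟨j', g'⟩ - - h
    have hg1 : g ≠ 1 := by
      rintro rfl
      simp at hg
    obtain rfl : j = j' := by_contra fun hjj' =>
      hg1 (by simpa [Pi.mulSingle_eq_of_ne hjj'] using congrFun h j)
    rw [show g = g' from (Pi.mulSingle_inj j).mp h]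
  · rintro f - hf
    obtain ⟨-, hct⟩ := not_not.mp (mt (fun h => if_neg h) hf)
    have hcyc : (wrOm f 1).IsCycle := Perm.card_cycleType_eq_one.mp (by rw [hct]; rfl)
    obtain ⟨j, hj⟩ := eq_mulSingle_of_isCycle_wrP_one hcyc
    rw [hj, hval] at hf
    exact ⟨(j, f j), Finset.mem_univ _, hf, hj.symm⟩

lemma cycleTypeSum_succ (hp : p.Prime) (hc : IsFullCycle c) {k l : ℕ} (hl : l ≤ k) :
    cycleTypeSum ψ (k + 1) l = p * cycleTypeSum ψ k l := by
  rw [cycleTypeSum, sum_Om_succ hp.pos _ fun x hx => if_neg fun h => hx h.1,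
    Fintype.sum_eq_single 1 fun σ hσ1 => Finset.sum_eq_zero fun f _ => if_neg fun h =>
      cycleType_wrOm_ne_singleton hp hc ((wrOm_mem_Pset_iff hp.pos).mp h.1).2 hσ1 hl f h.2,
    sum_wrOm_one_cycleType ψ hp.pos]

lemma cycleTypeSum_add (hp : p.Prime) (hc : IsFullCycle c) (l d : ℕ) :
    cycleTypeSum ψ (l + d) l = p ^ d * cycleTypeSum ψ l l := by
  induction d with
  | zero => simp
  | succ d ih => rw [← add_assoc, cycleTypeSum_succ ψ hp hc (by omega), ih, pow_succ]; ring

end CycleTypeSum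

section FullCycleSum

variable {p : ℕ} {c : Perm (Fin p)} (ψ : ℕ → (Subgroup.zpowers c →* ℂ))

/-- `Γ_{k;k}`, written with `IsFullCycle`, the form in which it passes through the wreath
product. -/
def fullCycleSum (k : ℕ) : ℂ :=
  ∑ x : Perm (Om p k),
    if x ∈ Pset p c k ∧ IsFullCycle x then XChar p c k (fun i => ψ i) x else 0

lemma fullCycleSum_zero : fullCycleSum ψ 0 = 1 := by
  have : Subsingleton (Perm (Om p 0)) := inferInstanceAs (Subsingleton (Perm Unit))
  rw [fullCycleSum, Fintype.sum_eq_single 1 fun x hx => absurd (Subsingleton.elim x 1) hx,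
    if_pos ⟨rfl, fun _ _ => ⟨0, rfl⟩⟩]
  rfl

lemma fullCycleSum_eq_cycleTypeSum (hp : 1 < p) {k : ℕ} (hk : 1 ≤ k) :
    fullCycleSum ψ k = cycleTypeSum ψ k k := by
  have : Nontrivial (Om p k) := Fintype.one_lt_card_iff_nontrivial.mp (by
    rw [card_Om]; exact Nat.one_lt_pow (by omega) hp)
  simp only [fullCycleSum, cycleTypeSum, isFullCycle_iff_cycleType, card_Om]

lemma sum_wrOm_fullCycle (hp : p.Prime) (hc : IsFullCycle c) (k : ℕ) (σ : Perm (Fin p)) :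
    ∑ f : Fin p → Perm (Om p k),
      (if wrOm f σ ∈ Pset p c (k + 1) ∧ IsFullCycle (wrOm f σ) then
        XChar p c (k + 1) (fun i => ψ i) (wrOm f σ) else 0) =
      (if σ ∈ Subgroup.zpowers c ∧ σ ≠ 1 then topVal p c (ψ k) σ else 0) *
        ((Nat.card (Pset p c k) : ℂ) ^ (p - 1) * fullCycleSum ψ k) := by
  have := Om_nonempty hp.pos k
  by_cases hσ : σ ∈ Subgroup.zpowers c
  swap
  · rw [if_neg fun h => hσ h.1, zero_mul]
    exact Finset.sum_eq_zero fun f _ => if_neg fun h => hσ ((wrOm_mem_Pset_iff hp.pos).mp h.1).2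
  by_cases hσ1 : σ = 1
  · subst hσ1
    rw [if_neg fun h => h.2 rfl, zero_mul]
    exact Finset.sum_eq_zero fun f _ => if_neg fun h => not_isFullCycle_wrP_one hp.two_le f h.2
  let j₀ : Fin p := ⟨0, hp.pos⟩
  have hG : fullCycleSum ψ k = ∑ g, if g ∈ Pset p c k then
      (if IsFullCycle g then XChar p c k (fun i => ψ i) g else 0) else 0 := by
    simp only [fullCycleSum, ite_and]
  rw [if_pos ⟨hσ, hσ1⟩, hG, ← sum_pi_Pset_cycleProd hp hc hσ hσ1 k j₀, Finset.mul_sum]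
  refine Finset.sum_congr rfl fun f _ => ?_
  by_cases hf : ∀ i, f i ∈ Pset p c k
  · rw [XChar_wrOm_seq ψ hp.pos, ← XChar_cycleProd_prime hp hc hσ hσ1 _ hf j₀]
    simp only [wrOm_mem_Pset_iff hp.pos, hf, hσ,
      show IsFullCycle (wrOm f σ) ↔ _ from isFullCycle_wrP_iff hp hc hσ hσ1 f j₀,
      implies_true, and_self, true_and, if_true]
    split_ifs <;> ring
  · simp [wrOm_mem_Pset_iff hp.pos, hf]

lemma fullCycleSum_succ (hp : p.Prime) (hc : IsFullCycle c) (k : ℕ) :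
    fullCycleSum ψ (k + 1) = ((if ψ k = 1 then (p : ℂ) else 0) - 1) *
      ((Nat.card (Pset p c k) : ℂ) ^ (p - 1) * fullCycleSum ψ k) := by
  rw [fullCycleSum, sum_Om_succ hp.pos _ fun x hx => if_neg fun h => hx h.1,
    Finset.sum_congr rfl fun σ _ => sum_wrOm_fullCycle ψ hp hc k σ, ← Finset.sum_mul,
    sum_topVal_ne_one hp hc]

lemma fullCycleSum_eq_prod (hp : p.Prime) (hc : IsFullCycle c) (u : ℕ → ℕ) (hu : ∀ m, u m ≤ 1) :
    ∀ l, (∀ m < l, ψ m = 1 ↔ u m = 1) → fullCycleSum ψ l =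
      (p : ℂ) ^ (∑ i ∈ Finset.range l, p ^ i) * ((p : ℂ) ^ l)⁻¹ *
        ∏ m ∈ Finset.range l, ((p : ℂ) * u m - 1)
  | 0, _ => by simp [fullCycleSum_zero]
  | l + 1, hψu => by
    have hchar : (if ψ l = 1 then (p : ℂ) else 0) - 1 = p * u l - 1 := by
      have hψl := hψu l l.lt_succ_self
      rcases Nat.le_one_iff_eq_zero_or_eq_one.mp (hu l) with h | h <;> simp_all
    have hpow : (p : ℂ) ^ (∑ i ∈ Finset.range (l + 1), p ^ i) =
        ((p : ℂ) ^ (∑ i ∈ Finset.range l, p ^ i)) ^ (p - 1) *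
          (p : ℂ) ^ (∑ i ∈ Finset.range l, p ^ i) * p := by
      rw [geom_sum_succ, pow_succ, pow_mul', pow_sub_one_mul hp.ne_zero]
    have hp0 : (p : ℂ) ≠ 0 := Nat.cast_ne_zero.mpr hp.ne_zero
    rw [fullCycleSum_succ ψ hp hc, hchar, card_Pset hp hc, Nat.cast_pow,
      fullCycleSum_eq_prod hp hc u hu l fun m hm => hψu m (hm.trans l.lt_succ_self), hpow,
      Finset.prod_range_succ, pow_succ]
    field_simp

end FullCycleSum

theorem stmt5_general (p k l : ℕ) (hp : p.Prime) (hl1 : 1 ≤ l) (hlk : l ≤ k)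
    (c : Perm (Fin p)) (hc : IsFullCycle c)
    (u : ℕ → ℕ) (hu : ∀ j, u j ≤ 1)
    (ψ : Fin k → (↥(Subgroup.zpowers c) →* ℂ))
    (hψ : ∀ j : Fin k, ψ j = 1 ↔ u (j : ℕ) = 1) :
    ∑ x : Perm (Om p k),
        (if x ∈ Pset p c k ∧ x.cycleType = {p ^ l} then XChar p c k ψ x else 0) =
      (p : ℂ) ^ k * ((p : ℂ) ^ (∑ i ∈ Finset.range l, p ^ i) * ((p : ℂ) ^ (2 * l))⁻¹ *
        ∏ m ∈ Finset.range l, ((p : ℂ) * u m - 1)) := by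
  let ψ' : ℕ → (Subgroup.zpowers c →* ℂ) := fun n => if h : n < k then ψ ⟨n, h⟩ else 1
  have hψ' : (fun i : Fin k => ψ' i) = ψ := funext fun i => dif_pos i.2
  have hψu (m : ℕ) (hm : m < l) : ψ' m = 1 ↔ u m = 1 := by
    simpa [ψ', show m < k by omega] using hψ ⟨m, by omega⟩
  obtain ⟨d, rfl⟩ : ∃ d, k = l + d := ⟨k - l, by omega⟩
  have hp0 : (p : ℂ) ≠ 0 := Nat.cast_ne_zero.mpr hp.ne_zero
  calc _ = cycleTypeSum ψ' (l + d) l := by rw [cycleTypeSum, hψ']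
    _ = p ^ d * fullCycleSum ψ' l := by
      rw [cycleTypeSum_add ψ' hp hc, fullCycleSum_eq_cycleTypeSum ψ' hp.one_lt hl1]
    _ = _ := by
      rw [fullCycleSum_eq_prod ψ' hp hc u hu l hψu]
      field_simp
      ring

/-- `Γ_{l;k}(u) = p^k · p^{(p^l-1)/(p-1) - 2l} · ∏_{m=1}^l (p u_m - 1)`:
the sum of `φ(u)(x)` over `x ∈ P_{p^k}` that are a single `p^l`-cycle. -/
theorem stmt5 (p k l : ℕ) (hp : p.Prime) (hk : 1 ≤ k) (hl1 : 1 ≤ l) (hlk : l ≤ k)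
    (c : Perm (Fin p)) (hc : IsFullCycle c)
    (u : ℕ → ℕ) (hu : ∀ j, u j ≤ 1)
    (ψ : Fin k → (↥(Subgroup.zpowers c) →* ℂ))
    (hψ : ∀ j : Fin k, ψ j = 1 ↔ u (j : ℕ) = 1) :
    ∑ x : Perm (Om p k),
        (if x ∈ Pset p c k ∧ x.cycleType = {p ^ l} then XChar p c k ψ x else 0) =
      (p : ℂ) ^ k * ((p : ℂ) ^ (∑ i ∈ Finset.range l, p ^ i) * ((p : ℂ) ^ (2 * l))⁻¹ *
        ∏ m ∈ Finset.range l, ((p : ℂ) * u m - 1)) :=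
  stmt5_general p k l hp hl1 hlk c hc u hu ψ hψ
end
end

section
/- Let p be a prime, k ∈ ℕ, a ∈ [p−1], and φ a linear character of P_{ap^k} (a Sylow p-subgroup of S_{ap^k}). Let g ∈ S_{ap^k} be a product of a disjoint p^k-cycles. Then the induced character value φ↑^{S_{ap^k}}(g) is nonzero. -/
/-!
For a subgroup `H` of index prime to `p`, a linear character `φ` of `H` and an element `g` with
`g ^ p ^ k = 1`, grouping the defining sum of `φ↑(g)` by left cosets of `H` leaves the sum of
`φ(x⁻¹ g x)` over the cosets `xH` fixed by `g`, a sum of `p^k`-th roots of unity. The `p`-group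
`⟨g⟩` fixes a number of cosets congruent to `[G : H] ≢ 0 (mod p)`. A vanishing sum of `N` such
roots of unity forces `p ∣ N`: writing the roots as powers of a primitive root `μ`, the minimal
polynomial `Φ_{p^(k+1)}` of `μ` divides the corresponding integer polynomial, and
`Φ_{p^(k+1)}(1) = p`.
-/

open scoped Classical
open Equiv

noncomputable section

/-- Induction of a function on a subgroup `P` of a finite group `G` to `G`. -/
def indC {G : Type*} [Group G] [Fintype G] (P : Subgroup G) (φ : P → ℂ) (g : G) : ℂ :=
  (Nat.card P : ℂ)⁻¹ * ∑ x : G, if h : x⁻¹ * g * x ∈ P then φ ⟨x⁻¹ * g * x, h⟩ else 0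

open Polynomial in
theorem prime_dvd_card_of_sum_rootsOfUnity_eq_zero {ι : Type*} [Fintype ι] {p k : ℕ}
    [Fact p.Prime] {z : ι → ℂ} (hz : ∀ i, z i ^ p ^ k = 1) (hsum : ∑ i, z i = 0) :
    p ∣ Fintype.card ι := by
  -- raising the exponent to `k + 1` makes `Φ_{p^(k+1)}(1) = p` available
  have hz' : ∀ i, z i ^ p ^ (k + 1) = 1 := fun i => by rw [pow_succ, pow_mul, hz, one_pow]
  have hn : 0 < p ^ (k + 1) := pow_pos (Fact.out : p.Prime).pos _
  have : NeZero (p ^ (k + 1)) := ⟨hn.ne'⟩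
  have hμ := Complex.isPrimitiveRoot_exp _ hn.ne'
  choose e _ he using fun i => hμ.eq_pow_of_pow_eq_one (hz' i)
  obtain ⟨R, hR⟩ : cyclotomic (p ^ (k + 1)) ℤ ∣ ∑ i, X ^ e i := by
    rw [cyclotomic_eq_minpoly hμ hn]
    exact minpoly.isIntegrallyClosed_dvd (hμ.isIntegral hn)
      (by simp only [map_sum, map_pow, aeval_X, he, hsum])
  have hR1 := congrArg (eval 1) hR
  simp only [eval_finsetSum, eval_pow, eval_X, one_pow, Finset.sum_const, Finset.card_univ,
    nsmul_eq_mul, mul_one, eval_mul, eval_one_cyclotomic_prime_pow] at hR1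
  exact Int.natCast_dvd_natCast.mp ⟨_, hR1⟩

section

variable {G : Type*} [Group G] {H : Subgroup G}

theorem sum_eq_card_smul_sum_out [Fintype G] {M : Type*} [AddCommMonoid M] {f : G → M}
    (hf : ∀ x, ∀ u ∈ H, f (x * u) = f x) :
    ∑ x, f x = Nat.card H • ∑ q : G ⧸ H, f q.out := by
  have hf_out (x : G) : f x = f (x : G ⧸ H).out := by
    have hmem : (x : G ⧸ H).out⁻¹ * x ∈ H := QuotientGroup.eq.mp (QuotientGroup.out_eq' _)
    simpa using hf (x : G ⧸ H).out _ hmem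
  have hfiber (q : G ⧸ H) : Fintype.card {x : G // (x : G ⧸ H) = q} = Nat.card H := by
    rw [← Nat.card_eq_fintype_card]
    exact (QuotientGroup.card_preimage_mk H {q}).trans (by simp)
  rw [Finset.sum_congr rfl fun x _ => hf_out x,
    ← Fintype.sum_fiberwise' (fun x : G => (x : G ⧸ H)) (fun q => f q.out), Finset.smul_sum]
  simp only [Finset.sum_const, Finset.card_univ, hfiber]

theorem smul_eq_self_iff_out_conj_mem {g : G} {q : G ⧸ H} :
    g • q = q ↔ q.out⁻¹ * g * q.out ∈ H := by
  calc g • q = q ↔ ((g * q.out : G) : G ⧸ H) = (q.out : G ⧸ H) := by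
        rw [← smul_eq_mul, MulAction.Quotient.mk_smul_out, QuotientGroup.out_eq']
    _ ↔ _ := by rw [QuotientGroup.eq, ← inv_mem_iff, mul_inv_rev, inv_inv, mul_assoc]

theorem mem_fixedPoints_zpowers_iff {α : Type*} [MulAction G α] {g : G} {a : α} :
    a ∈ MulAction.fixedPoints (Subgroup.zpowers g) α ↔ g • a = a := by
  refine ⟨fun h => h ⟨g, Subgroup.mem_zpowers g⟩, fun h x => ?_⟩
  exact Subgroup.zpowers_le.mpr (MulAction.mem_stabilizer_iff.mpr h) x.2

def extendByZero (H : Subgroup G) {M : Type*} [Zero M] (φ : H → M) (y : G) : M :=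
  if h : y ∈ H then φ ⟨y, h⟩ else 0

theorem extendByZero_of_mem {M : Type*} [Zero M] (φ : H → M) {y : G} (hy : y ∈ H) :
    extendByZero H φ y = φ ⟨y, hy⟩ :=
  dif_pos hy

theorem extendByZero_of_notMem {M : Type*} [Zero M] (φ : H → M) {y : G} (hy : y ∉ H) :
    extendByZero H φ y = 0 :=
  dif_neg hy

theorem extendByZero_pow_eq_one {M : Type*} [MonoidWithZero M] (φ : H →* M) {y : G} {n : ℕ}
    (hy : y ∈ H) (hyn : y ^ n = 1) : extendByZero H φ y ^ n = 1 := by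
  rw [extendByZero_of_mem _ hy, ← map_pow,
    show (⟨y, hy⟩ : H) ^ n = 1 from Subtype.ext (by simpa using hyn), map_one]

theorem extendByZero_conj {M : Type*} [CommMonoidWithZero M] (φ : H →* M) {u : G} (hu : u ∈ H)
    (y : G) : extendByZero H φ (u⁻¹ * y * u) = extendByZero H φ y := by
  have hmem : u⁻¹ * y * u ∈ H ↔ y ∈ H := by
    rw [H.mul_mem_cancel_right hu, H.mul_mem_cancel_left (H.inv_mem hu)]
  by_cases hy : y ∈ H
  · let v : H := ⟨u, hu⟩
    have hconj : (⟨u⁻¹ * y * u, hmem.mpr hy⟩ : H) = v⁻¹ * ⟨y, hy⟩ * v := rfl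
    rw [extendByZero_of_mem _ hy, extendByZero_of_mem _ (hmem.mpr hy), hconj, map_mul, map_mul,
      mul_right_comm, ← map_mul, inv_mul_cancel, map_one, one_mul]
  · rw [extendByZero_of_notMem φ hy, extendByZero_of_notMem φ (mt hmem.mp hy)]

variable [Fintype G]

theorem indC_eq_sum_fixedPoints (φ : H →* ℂ) (g : G) :
    indC H (fun x => φ x) g = ∑ q : MulAction.fixedPoints (Subgroup.zpowers g) (G ⧸ H),
      extendByZero H φ ((q : G ⧸ H).out⁻¹ * g * (q : G ⧸ H).out) := by
  set F : G → ℂ := fun x => extendByZero H φ (x⁻¹ * g * x)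
  have hF : ∀ x, ∀ u ∈ H, F (x * u) = F x := fun x u hu => by
    simpa only [F, mul_inv_rev, mul_assoc] using extendByZero_conj φ hu (x⁻¹ * g * x)
  have hF_out : ∀ q : G ⧸ H, q ∉ MulAction.fixedPoints (Subgroup.zpowers g) (G ⧸ H) →
      F q.out = 0 := fun q hq =>
    extendByZero_of_notMem φ fun hmem =>
      hq (mem_fixedPoints_zpowers_iff.mpr (smul_eq_self_iff_out_conj_mem.mpr hmem))
  have hH : (Nat.card H : ℂ) ≠ 0 := Nat.cast_ne_zero.mpr Nat.card_pos.ne'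
  calc indC H (fun x => φ x) g = (Nat.card H : ℂ)⁻¹ * ∑ x, F x := rfl
    _ = ∑ q : G ⧸ H, F q.out := by
      rw [sum_eq_card_smul_sum_out hF, nsmul_eq_mul, inv_mul_cancel_left₀ hH]
    _ = _ := by
      rw [← Fintype.sum_subtype_add_sum_subtype
        (· ∈ MulAction.fixedPoints (Subgroup.zpowers g) (G ⧸ H)) fun q => F q.out,
        add_eq_left]
      exact Fintype.sum_eq_zero _ fun q => hF_out q q.2

theorem indC_ne_zero_of_not_dvd_index {p k : ℕ} [Fact p.Prime] (hH : ¬p ∣ H.index)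
    (φ : H →* ℂ) {g : G} (hg : g ^ p ^ k = 1) : indC H (fun x => φ x) g ≠ 0 := by
  rw [indC_eq_sum_fixedPoints]
  intro hsum
  have hzpowers : IsPGroup p (Subgroup.zpowers g) := IsPGroup.of_card_dvd_pow (n := k) <| by
    rw [Nat.card_zpowers]; exact orderOf_dvd_of_pow_eq_one hg
  have hroots : ∀ q : MulAction.fixedPoints (Subgroup.zpowers g) (G ⧸ H),
      extendByZero H φ ((q : G ⧸ H).out⁻¹ * g * (q : G ⧸ H).out) ^ p ^ k = 1 := fun q => by
    refine extendByZero_pow_eq_one φ ?_ ?_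
    · exact smul_eq_self_iff_out_conj_mem.mp (mem_fixedPoints_zpowers_iff.mp q.2)
    · simpa [hg] using conj_pow (a := (q : G ⧸ H).out⁻¹) (b := g) (i := p ^ k)
  refine hH ((hzpowers.card_modEq_card_fixedPoints (G ⧸ H)).trans ?_ |> Nat.modEq_zero_iff_dvd.mp)
  rw [Nat.card_eq_fintype_card, Nat.modEq_zero_iff_dvd]
  exact prime_dvd_card_of_sum_rootsOfUnity_eq_zero hroots hsum

end

theorem stmt6_general (p a k : ℕ) (hp : p.Prime)
    (P : Sylow p (Perm (Fin (a * p ^ k))))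
    (φ : ↥(P : Subgroup (Perm (Fin (a * p ^ k)))) →* ℂ)
    (g : Perm (Fin (a * p ^ k))) (hg : g.cycleType = Multiset.replicate a (p ^ k)) :
    indC (P : Subgroup (Perm (Fin (a * p ^ k)))) (fun x => φ x) g ≠ 0 := by
  have : Fact p.Prime := ⟨hp⟩
  have hg_pow : g ^ p ^ k = 1 := by
    rw [← orderOf_dvd_iff_pow_eq_one, ← Perm.lcm_cycleType, hg]
    exact Multiset.lcm_dvd.mpr fun b hb => (Multiset.eq_of_mem_replicate hb).dvd
  exact indC_ne_zero_of_not_dvd_index P.not_dvd_index φ hg_pow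

/-- for `a ∈ [p-1]`, a linear character `φ` of a Sylow `p`-subgroup of
`S_{ap^k}` and `g` a product of `a` disjoint `p^k`-cycles, `φ↑^{S_{ap^k}}(g) ≠ 0`. -/
theorem stmt6 (p a k : ℕ) (hp : p.Prime) (ha1 : 1 ≤ a) (ha2 : a ≤ p - 1) (hk : 1 ≤ k)
    (P : Sylow p (Perm (Fin (a * p ^ k))))
    (φ : ↥(P : Subgroup (Perm (Fin (a * p ^ k)))) →* ℂ)
    (g : Perm (Fin (a * p ^ k))) (hg : g.cycleType = Multiset.replicate a (p ^ k)) :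
    indC (P : Subgroup (Perm (Fin (a * p ^ k)))) (fun x => φ x) g ≠ 0 :=
  stmt6_general p a k hp P φ g hg

end
end

section
/- Let q ≥ 2 be an integer, a ∈ [q], and let σ_1,…,σ_a, τ_1,…,τ_a be nonnegative integers. If ∑_{j=1}^a (−q)^{σ_j} = ∑_{j=1}^a (−q)^{τ_j}, then either the multisets {σ_1,…,σ_a} and {τ_1,…,τ_a} are equal, or a = q and the two multisets are {w, w−1, …, w−1} (one copy of w and q−1 copies of w−1) and {w−2, …, w−2} (q copies of w−2), in some order, for some integer w ≥ 2. -/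
private lemma pw_sum_mod (q : ℕ) (S : Multiset ℕ) :
    (q:ℤ) ∣ (S.map (fun k => (-(q:ℤ))^k)).sum - S.count 0 := by
  induction S using Multiset.induction with
  | empty => simp
  | cons k S ih =>
    simp only [Multiset.map_cons, Multiset.sum_cons, Multiset.count_cons]
    rcases Nat.eq_zero_or_pos k with hk | hk
    · subst hk
      simp only [pow_zero, if_pos rfl]
      push_cast
      have h : (1:ℤ) + (S.map (fun k => (-(q:ℤ))^k)).sum - ((S.count 0 : ℤ) + 1)
          = (S.map (fun k => (-(q:ℤ))^k)).sum - S.count 0 := by ring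
      rw [h]; exact ih
    · have hne : ¬ (0 = k) := by omega
      simp only [if_neg hne, add_zero]
      have hk' : k = (k - 1) + 1 := by omega
      have hterm : (-(q:ℤ))^k = (q:ℤ) * (-((-(q:ℤ))^(k-1))) := by
        conv_lhs => rw [hk']
        rw [pow_succ]; ring
      have h : (-(q:ℤ))^k + (S.map (fun k => (-(q:ℤ))^k)).sum - (S.count 0 : ℤ)
          = (-(q:ℤ))^k + ((S.map (fun k => (-(q:ℤ))^k)).sum - S.count 0) := by ring
      rw [h, hterm]
      exact dvd_add ⟨-((-(q:ℤ))^(k-1)), rfl⟩ ih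

private lemma pw_factor (q : ℕ) (S : Multiset ℕ) (h1 : ∀ x ∈ S, 1 ≤ x) :
    (S.map (fun k => (-(q:ℤ))^k)).sum
      = (-(q:ℤ)) * (((S.map (fun k => k - 1)).map (fun k => (-(q:ℤ))^k)).sum) := by
  induction S using Multiset.induction with
  | empty => simp
  | cons k S ih =>
    simp only [Multiset.map_cons, Multiset.sum_cons]
    have hk : 1 ≤ k := h1 k (Multiset.mem_cons_self _ _)
    have hk' : k = (k - 1) + 1 := by omega
    rw [ih (fun x hx => h1 x (Multiset.mem_cons_of_mem hx))]
    have hterm : (-(q:ℤ))^k = (-(q:ℤ)) * (-(q:ℤ))^(k-1) := by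
      conv_lhs => rw [hk']
      rw [pow_succ]; ring
    rw [hterm]; ring

private lemma shift_back (S : Multiset ℕ) (h1 : ∀ x ∈ S, 1 ≤ x) :
    (S.map (fun k => k - 1)).map (fun k => k + 1) = S := by
  rw [Multiset.map_map]
  conv_rhs => rw [← Multiset.map_id S]
  apply Multiset.map_congr rfl
  intro x hx
  have := h1 x hx
  simp only [Function.comp_apply, Multiset.map_id, id]
  omega

private lemma sum_map_pred (S : Multiset ℕ) (h1 : ∀ x ∈ S, 1 ≤ x) :
    (S.map (fun k => k - 1)).sum + S.card = S.sum := by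
  induction S using Multiset.induction with
  | empty => simp
  | cons k S ih =>
    have hk : 1 ≤ k := h1 k (Multiset.mem_cons_self _ _)
    have := ih (fun x hx => h1 x (Multiset.mem_cons_of_mem hx))
    simp only [Multiset.map_cons, Multiset.sum_cons, Multiset.card_cons]
    omega

private lemma sum_map_pred_le (S : Multiset ℕ) :
    (S.map (fun k => k - 1)).sum ≤ S.sum := by
  induction S using Multiset.induction with
  | empty => simp
  | cons k S ih =>
    simp only [Multiset.map_cons, Multiset.sum_cons]
    omega

private lemma caseB (q : ℕ) (hq : 2 ≤ q) (T : Multiset ℕ) (hcard : T.card = q)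
    (h1 : ∀ x ∈ T, 1 ≤ x)
    (hsum : (T.map (fun k => (-(q:ℤ))^k)).sum = q) :
    T = 2 ::ₘ Multiset.replicate (q-1) 1 := by
  set T' := T.map (fun k => k - 1) with hT'
  have hfac := pw_factor q T h1
  have hT'sum : (T'.map (fun k => (-(q:ℤ))^k)).sum = -1 := by
    have hq0 : (-(q:ℤ)) ≠ 0 := by
      have : (0:ℤ) < q := by exact_mod_cast (by omega : 0 < q)
      omega
    apply mul_left_cancel₀ hq0
    rw [← hfac, hsum]; ring
  have hmod := pw_sum_mod q T'
  rw [hT'sum] at hmod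
  set c := T'.count 0 with hc
  have hcle : c ≤ q := by
    have := Multiset.count_le_card 0 T'
    simp only [hT', Multiset.card_map, hcard] at this
    exact this
  have hdvd : (q:ℤ) ∣ (c:ℤ) + 1 := by
    have : ((c:ℤ) + 1) = -(-1 - (c:ℤ)) := by ring
    rw [this]; exact hmod.neg_right
  have hdvdn : q ∣ c + 1 := by exact_mod_cast hdvd
  have hcval : c = q - 1 := by
    obtain ⟨m, hm⟩ := hdvdn
    rcases Nat.lt_or_ge m 2 with h | h
    · interval_cases m <;> omega
    · have : 2 * q ≤ q * m := by nlinarith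
      omega
  -- split T'
  have hsplit : T'.filter (· = 0) + T'.filter (fun a => ¬ a = 0) = T' :=
    Multiset.filter_add_not _ _
  have hfil : T'.filter (· = 0) = Multiset.replicate c 0 := Multiset.filter_eq' T' 0
  have hcard' : (T'.filter (fun a => ¬ a = 0)).card = 1 := by
    have h2 : T'.card = q := by simp [hT', hcard]
    have := congrArg Multiset.card hsplit
    simp only [Multiset.card_add, hfil, Multiset.card_replicate, h2] at this
    omega
  obtain ⟨μ, hμ⟩ := Multiset.card_eq_one.mp hcard'
  have hμne : ¬ μ = 0 := by
    have : μ ∈ T'.filter (fun a => ¬ a = 0) := by rw [hμ]; simp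
    exact (Multiset.mem_filter.mp this).2
  have hT'eq : T' = Multiset.replicate c 0 + {μ} := by
    rw [← hsplit, hfil, hμ]
  have hpow : (-(q:ℤ))^μ = -(q:ℤ) := by
    have := hT'sum
    rw [hT'eq] at this
    simp only [Multiset.map_add, Multiset.map_replicate, Multiset.sum_add, pow_zero,
      Multiset.sum_replicate, nsmul_eq_mul, mul_one, Multiset.map_singleton,
      Multiset.sum_singleton] at this
    have hc1 : ((c:ℤ)) = (q:ℤ) - 1 := by
      rw [hcval]; push_cast [Nat.cast_sub (by omega : 1 ≤ q)]; ring
    rw [hc1] at this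
    linarith
  have hμ1 : μ = 1 := by
    have habs : q ^ μ = q := by
      have := congrArg Int.natAbs hpow
      simpa [Int.natAbs_pow] using this
    have : q ^ μ = q ^ 1 := by rw [habs, pow_one]
    exact Nat.pow_right_injective hq this
  subst hμ1
  have hT : T = (T'.map (fun k => k + 1)) := (shift_back T h1).symm
  rw [hT, hT'eq, hcval]
  simp only [Multiset.map_add, Multiset.map_replicate, Multiset.map_singleton]
  rw [add_comm, Multiset.singleton_add]

private lemma keyB (q : ℕ) (hq : 2 ≤ q) (S T : Multiset ℕ)
    (hcard : S.card = T.card) (hle : S.card ≤ q)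
    (hsum : (S.map (fun k => (-(q:ℤ))^k)).sum = (T.map (fun k => (-(q:ℤ))^k)).sum)
    (hs0 : S.count 0 = q) (ht0 : T.count 0 = 0) :
    T = 2 ::ₘ Multiset.replicate (q-1) 1 ∧ S = Multiset.replicate q 0 := by
  have hScard : S.card = q := by
    have := Multiset.count_le_card 0 S
    omega
  have hSrep : S = Multiset.replicate q 0 := by
    rw [Multiset.eq_replicate]
    constructor
    · exact hScard
    · intro b hb
      have := Multiset.count_eq_card.mp (by rw [hs0, hScard]) b hb
      omega
  have hT1 : ∀ x ∈ T, 1 ≤ x := by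
    intro x hx
    have : x ≠ 0 := by
      intro h; subst h
      exact (Multiset.count_eq_zero.mp ht0) hx
    omega
  have hTsum : (T.map (fun k => (-(q:ℤ))^k)).sum = q := by
    rw [← hsum, hSrep]
    simp [Multiset.map_replicate, Multiset.sum_replicate]
  exact ⟨caseB q hq T (by omega) hT1 hTsum, hSrep⟩

private lemma key (q : ℕ) (hq : 2 ≤ q) : ∀ n : ℕ, ∀ S T : Multiset ℕ,
    S.sum + T.sum ≤ n → S.card = T.card → S.card ≤ q →
    (S.map (fun k => (-(q:ℤ))^k)).sum = (T.map (fun k => (-(q:ℤ))^k)).sum →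
    S = T ∨ (S.card = q ∧ ∃ w : ℕ, 2 ≤ w ∧
      ((S = w ::ₘ Multiset.replicate (q-1) (w-1) ∧ T = Multiset.replicate q (w-2)) ∨
       (T = w ::ₘ Multiset.replicate (q-1) (w-1) ∧ S = Multiset.replicate q (w-2)))) := by
  intro n
  induction n using Nat.strong_induction_on with
  | _ n ih =>
  intro S T hn hcard hle hsum
  set s0 := S.count 0 with hs0
  set t0 := T.count 0 with ht0
  have hs0le : s0 ≤ S.card := Multiset.count_le_card 0 S
  have ht0le : t0 ≤ T.card := Multiset.count_le_card 0 T
  have hdvd : (q:ℤ) ∣ (s0:ℤ) - t0 := by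
    have d1 := pw_sum_mod q S
    have d2 := pw_sum_mod q T
    rw [hsum] at d1
    have := dvd_sub d1 d2
    have heq : ((T.map (fun k => (-(q:ℤ))^k)).sum - s0)
        - ((T.map (fun k => (-(q:ℤ))^k)).sum - t0) = (t0:ℤ) - s0 := by ring
    rw [heq] at this
    have := this.neg_right
    simpa using this
  by_cases h0 : s0 = t0
  · -- main case: equal zero counts
    have hsplitS : S.filter (· = 0) + S.filter (fun a => ¬ a = 0) = S :=
      Multiset.filter_add_not _ _
    have hsplitT : T.filter (· = 0) + T.filter (fun a => ¬ a = 0) = T :=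
      Multiset.filter_add_not _ _
    have hfilS : S.filter (· = 0) = Multiset.replicate s0 0 := Multiset.filter_eq' S 0
    have hfilT : T.filter (· = 0) = Multiset.replicate t0 0 := Multiset.filter_eq' T 0
    set S' := S.filter (fun a => ¬ a = 0) with hS'
    set T' := T.filter (fun a => ¬ a = 0) with hT'
    have hS'1 : ∀ x ∈ S', 1 ≤ x := by
      intro x hx
      have := (Multiset.mem_filter.mp hx).2
      omega
    have hT'1 : ∀ x ∈ T', 1 ≤ x := by
      intro x hx
      have := (Multiset.mem_filter.mp hx).2
      omega
    have hcardS : S.card = s0 + S'.card := by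
      conv_lhs => rw [← hsplitS]
      simp [hfilS]
    have hcardT : T.card = t0 + T'.card := by
      conv_lhs => rw [← hsplitT]
      simp [hfilT]
    have hsumS : (S.map (fun k => (-(q:ℤ))^k)).sum
        = (s0:ℤ) + (S'.map (fun k => (-(q:ℤ))^k)).sum := by
      conv_lhs => rw [← hsplitS]
      simp [hfilS, Multiset.map_replicate, Multiset.sum_replicate]
    have hsumT : (T.map (fun k => (-(q:ℤ))^k)).sum
        = (t0:ℤ) + (T'.map (fun k => (-(q:ℤ))^k)).sum := by
      conv_lhs => rw [← hsplitT]
      simp [hfilT, Multiset.map_replicate, Multiset.sum_replicate]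
    have hsum' : (S'.map (fun k => (-(q:ℤ))^k)).sum = (T'.map (fun k => (-(q:ℤ))^k)).sum := by
      rw [hsumS, hsumT, h0] at hsum
      linarith
    set S'' := S'.map (fun k => k - 1) with hS''
    set T'' := T'.map (fun k => k - 1) with hT''
    have hsum'' : (S''.map (fun k => (-(q:ℤ))^k)).sum = (T''.map (fun k => (-(q:ℤ))^k)).sum := by
      have hfS := pw_factor q S' hS'1
      have hfT := pw_factor q T' hT'1
      rw [hfS, hfT] at hsum'
      have hq0 : (-(q:ℤ)) ≠ 0 := by
        have : (0:ℤ) < q := by exact_mod_cast (by omega : 0 < q)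
        omega
      exact mul_left_cancel₀ hq0 hsum'
    rcases Nat.eq_zero_or_pos S'.card with hc0 | hc0
    · -- no positive exponents: S = T
      left
      have hTc0 : T'.card = 0 := by omega
      have : S' = 0 := Multiset.card_eq_zero.mp hc0
      have hT0 : T' = 0 := Multiset.card_eq_zero.mp hTc0
      rw [← hsplitS, ← hsplitT, hfilS, hfilT, h0, this, hT0]
    · -- recurse
      have hfuel : S''.sum + T''.sum < n := by
        have h1 : S''.sum + S'.card = S'.sum := sum_map_pred S' hS'1
        have h2 : T''.sum ≤ T'.sum := sum_map_pred_le T'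
        have hSsum : S.sum = S'.sum := by
          conv_lhs => rw [← hsplitS]
          simp [hfilS]
        have hTsum : T.sum = T'.sum := by
          conv_lhs => rw [← hsplitT]
          simp [hfilT]
        have : S''.sum < S'.sum := by omega
        have hT2 : T''.sum ≤ T'.sum := h2
        omega
      have hcard'' : S''.card = T''.card := by
        simp only [hS'', hT'', Multiset.card_map]
        omega
      have hle'' : S''.card ≤ q := by
        simp only [hS'', Multiset.card_map]
        omega
      have hrec := ih _ hfuel S'' T'' le_rfl hcard'' hle'' hsum''
      rcases hrec with heq | ⟨hcq, w, hw, hcase⟩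
      · -- equal shifted multisets
        left
        have hS'eq : S' = S''.map (fun k => k + 1) := (shift_back S' hS'1).symm
        have hT'eq : T' = T''.map (fun k => k + 1) := (shift_back T' hT'1).symm
        rw [← hsplitS, ← hsplitT, hfilS, hfilT, h0, hS'eq, hT'eq, heq]
      · -- exceptional case, shift w up
        have hS''card : S''.card = S'.card := by simp [hS'']
        have hs00 : s0 = 0 := by omega
        have hScard : S.card = q := by omega
        have hSS' : S = S' := by
          conv_lhs => rw [← hsplitS, hfilS, hs00]
          simp
        have hTT' : T = T' := by
          conv_lhs => rw [← hsplitT, hfilT, ← h0, hs00]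
          simp
        right
        refine ⟨hScard, w + 1, by omega, ?_⟩
        have hshift : ∀ (M : Multiset ℕ), M = w ::ₘ Multiset.replicate (q-1) (w-1) →
            M.map (fun k => k + 1) = (w+1) ::ₘ Multiset.replicate (q-1) ((w+1)-1) := by
          intro M hM
          rw [hM]
          simp only [Multiset.map_cons, Multiset.map_replicate]
          congr 2
          omega
        have hshift2 : ∀ (M : Multiset ℕ), M = Multiset.replicate q (w-2) →
            M.map (fun k => k + 1) = Multiset.replicate q ((w+1)-2) := by
          intro M hM
          rw [hM]
          simp only [Multiset.map_replicate]
          congr 1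
          omega
        rcases hcase with ⟨hA, hB⟩ | ⟨hA, hB⟩
        · left
          constructor
          · rw [hSS', (shift_back S' hS'1).symm]
            exact hshift _ hA
          · rw [hTT', (shift_back T' hT'1).symm]
            exact hshift2 _ hB
        · right
          constructor
          · rw [hTT', (shift_back T' hT'1).symm]
            exact hshift _ hA
          · rw [hSS', (shift_back S' hS'1).symm]
            exact hshift2 _ hB
  · -- unequal zero counts: forced exceptional base case
    have habs : (s0 = q ∧ t0 = 0) ∨ (s0 = 0 ∧ t0 = q) := by
      have hne : (s0:ℤ) - t0 ≠ 0 := by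
        intro h
        apply h0
        omega
      have hq' : (0:ℤ) < |(s0:ℤ) - t0| := abs_pos.mpr hne
      have hled : (q:ℤ) ≤ |(s0:ℤ) - t0| := Int.le_of_dvd hq' ((dvd_abs _ _).mpr hdvd)
      have hb1 : s0 ≤ q := by omega
      have hb2 : t0 ≤ q := by omega
      rcases abs_cases ((s0:ℤ) - t0) with ⟨he, _⟩ | ⟨he, _⟩ <;> [skip; skip] <;> omega
    rcases habs with ⟨h1, h2⟩ | ⟨h1, h2⟩
    · obtain ⟨hTeq, hSeq⟩ := keyB q hq S T hcard hle hsum h1 h2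
      right
      refine ⟨by omega, 2, le_rfl, Or.inr ⟨?_, ?_⟩⟩
      · simpa using hTeq
      · simpa using hSeq
    · obtain ⟨hSeq, hTeq⟩ := keyB q hq T S hcard.symm (by omega) hsum.symm h2 h1
      right
      refine ⟨by omega, 2, le_rfl, Or.inl ⟨?_, ?_⟩⟩
      · simpa using hSeq
      · simpa using hTeq

/-- the signed-powers lemma.  If `q ≥ 2`, `a ∈ [q]` and
`∑_j (−q)^{σ_j} = ∑_j (−q)^{τ_j}`, then either the multisets of exponents are equal, or
`a = q` and the two multisets are `{w, w−1, …, w−1}` and `{w−2, …, w−2}` (in some order)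
for some `w ≥ 2`. -/
theorem stmt11 (q a : ℕ) (hq : 2 ≤ q) (ha1 : 1 ≤ a) (ha2 : a ≤ q)
    (σ τ : Fin a → ℕ)
    (h : ∑ j : Fin a, (-(q : ℤ)) ^ (σ j) = ∑ j : Fin a, (-(q : ℤ)) ^ (τ j)) :
    Multiset.map σ Finset.univ.val = Multiset.map τ Finset.univ.val ∨
      (a = q ∧ ∃ w : ℕ, 2 ≤ w ∧
        ((Multiset.map σ Finset.univ.val = w ::ₘ Multiset.replicate (a - 1) (w - 1) ∧
          Multiset.map τ Finset.univ.val = Multiset.replicate a (w - 2)) ∨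
         (Multiset.map τ Finset.univ.val = w ::ₘ Multiset.replicate (a - 1) (w - 1) ∧
          Multiset.map σ Finset.univ.val = Multiset.replicate a (w - 2)))) := by
  set S := Multiset.map σ Finset.univ.val with hS
  set T := Multiset.map τ Finset.univ.val with hT
  have hcardS : S.card = a := by simp [hS]
  have hcardT : T.card = a := by simp [hT]
  have hsum : (S.map (fun k => (-(q:ℤ))^k)).sum = (T.map (fun k => (-(q:ℤ))^k)).sum := by
    rw [hS, hT, Multiset.map_map, Multiset.map_map]
    exact h
  rcases key q hq (S.sum + T.sum) S T le_rfl (by omega) (by omega) hsum with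
    heq | ⟨hcq, w, hw, hcase⟩
  · exact Or.inl heq
  · have haq : a = q := by omega
    right
    refine ⟨haq, w, hw, ?_⟩
    rw [haq]
    exact hcase
end

section
/- Let q ≥ 2 be an integer and a ∈ [q], and let σ_1,…,σ_a, τ_1,…,τ_a be even nonnegative integers. If ∑_{j=1}^a (−q)^{σ_j} = ∑_{j=1}^a (−q)^{τ_j}, then the multisets {σ_1,…,σ_a} and {τ_1,…,τ_a} are equal. -/
/-!
For even exponents `(-q)^σ = (q²)^(σ/2)`, so the hypothesis says that two multisets of fewer
than `q²` exponents `σ_j / 2` give the same sum of powers of `Q = q²`. Such a sum determines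
the multiset: the multiplicity of `e` is the base-`Q` digit of the sum at position `e`, because
the smaller exponents contribute less than `Q^e` in total and the larger ones a multiple of
`Q^(e+1)`.
-/

namespace Multiset

variable {Q : ℕ} {s t : Multiset ℕ}

lemma filter_lt_add_filter_eq_add_filter_gt (s : Multiset ℕ) (e : ℕ) :
    s.filter (· < e) + s.filter (· = e) + s.filter (e < ·) = s := by
  ext x
  simp only [count_add, count_filter]
  split_ifs <;> omega

lemma sum_map_pow_lt_of_forall_lt {e : ℕ} (hs : card s < Q) (h : ∀ x ∈ s, x < e) :
    (s.map (Q ^ ·)).sum < Q ^ e := by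
  have hQ : 0 < Q := by omega
  refine lt_of_mul_lt_mul_left (a := Q) ?_ (Nat.zero_le _)
  calc Q * (s.map (Q ^ ·)).sum = (s.map fun x => Q ^ (x + 1)).sum := by
        simp only [pow_succ', sum_map_mul_left]
    _ ≤ card s * Q ^ e := by
        simpa using sum_le_card_nsmul (s.map fun x => Q ^ (x + 1)) (Q ^ e) <| by
          simpa using fun x hx => Nat.pow_le_pow_right hQ (h x hx)
    _ < Q * Q ^ e := Nat.mul_lt_mul_of_pos_right hs (by positivity)

lemma count_eq_sum_map_pow_div_mod (hs : card s < Q) (e : ℕ) :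
    s.count e = (s.map (Q ^ ·)).sum / Q ^ e % Q := by
  have hQ : 0 < Q := by omega
  set low := ((s.filter (· < e)).map (Q ^ ·)).sum
  have hlow : low < Q ^ e :=
    sum_map_pow_lt_of_forall_lt ((card_le_card (filter_le _ s)).trans_lt hs)
      fun x hx => (mem_filter.1 hx).2
  obtain ⟨high, hhigh⟩ : Q ^ (e + 1) ∣ ((s.filter (e < ·)).map (Q ^ ·)).sum :=
    dvd_sum <| by
      simp only [mem_map, mem_filter]
      rintro _ ⟨x, ⟨-, hx⟩, rfl⟩
      exact pow_dvd_pow Q hx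
  have hsum : (s.map (Q ^ ·)).sum = low + Q ^ e * (s.count e + Q * high) := by
    conv_lhs => rw [← filter_lt_add_filter_eq_add_filter_gt s e]
    rw [map_add, map_add, sum_add, sum_add, hhigh, filter_eq', map_replicate, sum_replicate]
    ring
  rw [hsum, Nat.add_mul_div_left _ _ (by positivity), Nat.div_eq_of_lt hlow, zero_add,
    Nat.add_mul_mod_self_left, Nat.mod_eq_of_lt ((count_le_card e s).trans_lt hs)]

lemma eq_of_sum_map_pow_eq (hs : card s < Q) (ht : card t < Q)
    (h : (s.map (Q ^ ·)).sum = (t.map (Q ^ ·)).sum) : s = t :=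
  ext.2 fun e => by rw [count_eq_sum_map_pow_div_mod hs, count_eq_sum_map_pow_div_mod ht, h]

lemma map_two_mul_map_div_two (hs : ∀ x ∈ s, Even x) : (s.map (· / 2)).map (2 * ·) = s := by
  rw [map_map]
  exact (map_congr rfl fun x hx => Nat.two_mul_div_two_of_even (hs x hx)).trans (map_id' s)

lemma sum_map_neg_pow_of_even (q : ℕ) (hs : ∀ x ∈ s, Even x) :
    (s.map ((-(q : ℤ)) ^ ·)).sum = (((s.map (· / 2)).map ((q ^ 2) ^ ·)).sum : ℕ) := by
  rw [Nat.cast_multiset_sum, map_map, map_map]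
  refine congrArg sum (map_congr rfl fun x hx => ?_)
  simp [(hs x hx).neg_pow, ← pow_mul, Nat.two_mul_div_two_of_even (hs x hx)]

lemma eq_of_sum_map_neg_pow_eq {q : ℕ} (hs : card s < q ^ 2) (ht : card t < q ^ 2)
    (hs_even : ∀ x ∈ s, Even x) (ht_even : ∀ x ∈ t, Even x)
    (h : (s.map ((-(q : ℤ)) ^ ·)).sum = (t.map ((-(q : ℤ)) ^ ·)).sum) : s = t := by
  rw [sum_map_neg_pow_of_even q hs_even, sum_map_neg_pow_of_even q ht_even, Nat.cast_inj] at h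
  have halves := eq_of_sum_map_pow_eq (by simpa using hs) (by simpa using ht) h
  rw [← map_two_mul_map_div_two hs_even, ← map_two_mul_map_div_two ht_even, halves]

end Multiset

theorem stmt12_general (q a : ℕ) (hq : 2 ≤ q) (ha2 : a ≤ q)
    (σ τ : Fin a → ℕ) (hσ : ∀ j, Even (σ j)) (hτ : ∀ j, Even (τ j))
    (h : ∑ j : Fin a, (-(q : ℤ)) ^ (σ j) = ∑ j : Fin a, (-(q : ℤ)) ^ (τ j)) :
    Multiset.map σ Finset.univ.val = Multiset.map τ Finset.univ.val := by
  have hcard : a < q ^ 2 := by nlinarith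
  refine Multiset.eq_of_sum_map_neg_pow_eq (by simpa using hcard) (by simpa using hcard)
    (by simpa using hσ) (by simpa using hτ) ?_
  simpa only [Multiset.map_map, Function.comp_def, Finset.sum_eq_multiset_sum] using h

/-- the signed-powers lemma with even exponents.  If `q ≥ 2`, `a ∈ [q]`,
all `σ_j, τ_j` are even, and `∑_j (−q)^{σ_j} = ∑_j (−q)^{τ_j}`, then the multisets of
exponents are equal. -/
theorem stmt12 (q a : ℕ) (hq : 2 ≤ q) (ha1 : 1 ≤ a) (ha2 : a ≤ q)
    (σ τ : Fin a → ℕ) (hσ : ∀ j, Even (σ j)) (hτ : ∀ j, Even (τ j))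
    (h : ∑ j : Fin a, (-(q : ℤ)) ^ (σ j) = ∑ j : Fin a, (-(q : ℤ)) ^ (τ j)) :
    Multiset.map σ Finset.univ.val = Multiset.map τ Finset.univ.val :=
  stmt12_general q a hq ha2 σ τ hσ hτ h
end

section
/- Let {l_1,…,l_b} and {m_1,…,m_b} be equal multisets of integers. Suppose moreover that for some c ∈ [b−1], the multisets {l_1+1,…,l_c+1, l_{c+1},…,l_b} and {m_1+1,…,m_c+1, m_{c+1},…,m_b} are equal. Then {l_1,…,l_c} = {m_1,…,m_c} as multisets (and hence also {l_{c+1},…,l_b} = {m_{c+1},…,m_b}). -/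
/-!
Split each multiset into its designated part and the rest: `L + L' = M + M'` and
`L↑ + L' = M↑ + M'`, where `↑` adds `1` to every element. Adding the first equation to the
second one read backwards and cancelling `L' + M'` leaves `L + M↑ = M + L↑`. In this
equation the least element `a` of `L + M` lies in both `L` and `M`, since it cannot be of the
form `y + 1` with `y ∈ L + M`; cancelling `a` from `L` and `M` and inducting gives `L = M`.
-/

namespace Multiset

variable {α : Type*} [LinearOrder α] {s : α → α}

theorem mem_of_mem_of_forall_le_of_add_map_eq (hs : ∀ x, x < s x) {A B : Multiset α} {a : α}
    (h : A + B.map s = B + A.map s) (hmin : ∀ y ∈ A + B, a ≤ y) (ha : a ∈ A) : a ∈ B := by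
  have : a ∈ B + A.map s := h ▸ mem_add.2 (Or.inl ha)
  rcases mem_add.1 this with hB | hA
  · exact hB
  · obtain ⟨y, hy, rfl⟩ := mem_map.1 hA
    exact absurd (hmin y (mem_add.2 (Or.inl hy))) (hs y).not_ge

theorem eq_of_add_map_eq_add_map (hs : ∀ x, x < s x) {A B : Multiset α}
    (h : A + B.map s = B + A.map s) : A = B := by
  induction A using strongInductionOn generalizing B with
  | ih A ih =>
  rcases (A + B).empty_or_exists_mem with h0 | ⟨x, hx⟩
  · rw [add_eq_zero] at h0
    rw [h0.1, h0.2]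
  obtain ⟨a, ha, hmin⟩ := (A + B).toFinset.exists_min_image id ⟨x, mem_toFinset.2 hx⟩
  simp only [mem_toFinset, id] at ha hmin
  have haAB : a ∈ A ∧ a ∈ B := by
    rcases mem_add.1 ha with hA | hB
    · exact ⟨hA, mem_of_mem_of_forall_le_of_add_map_eq hs h hmin hA⟩
    · refine ⟨mem_of_mem_of_forall_le_of_add_map_eq hs h.symm ?_ hB, hB⟩
      simpa only [add_comm B A] using hmin
  obtain ⟨A', rfl⟩ := exists_cons_of_mem haAB.1
  obtain ⟨B', rfl⟩ := exists_cons_of_mem haAB.2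
  simp only [map_cons, cons_add, add_cons, cons_inj_right] at h
  rw [ih A' (lt_cons_self A' a) h]

end Multiset

theorem add_eq_add_of_add_eq_add_of_add_eq_add {M : Type*} [AddCancelCommMonoid M]
    {a b c d x y : M} (h₁ : a + x = b + y) (h₂ : c + x = d + y) : a + d = b + c := by
  apply add_right_cancel (b := x + y)
  calc a + d + (x + y) = (a + x) + (d + y) := by abel
    _ = (b + y) + (c + x) := by rw [h₁, h₂]
    _ = b + c + (x + y) := by abel

theorem Finset.range_val_eq_add_Ico_val {b c : ℕ} (hcb : c ≤ b) :
    (Finset.range b).val = (Finset.range c).val + (Finset.Ico c b).val := by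
  rw [Finset.range_eq_Ico, Finset.range_eq_Ico]
  exact (Multiset.Ico_add_Ico_eq_Ico (Nat.zero_le c) hcb).symm

theorem stmt13_general (b c : ℕ) (hc2 : c < b) (l m : ℕ → ℤ)
    (h1 : (Finset.range b).val.map l = (Finset.range b).val.map m)
    (h2 : (Finset.range b).val.map (fun i => if i < c then l i + 1 else l i) =
          (Finset.range b).val.map (fun i => if i < c then m i + 1 else m i)) :
    (Finset.range c).val.map l = (Finset.range c).val.map m ∧
      (Finset.Ico c b).val.map l = (Finset.Ico c b).val.map m := by
  rw [Finset.range_val_eq_add_Ico_val hc2.le, Multiset.map_add, Multiset.map_add] at h1 h2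
  have shift_low (f : ℕ → ℤ) : (Finset.range c).val.map (fun i => if i < c then f i + 1 else f i) =
      ((Finset.range c).val.map f).map (· + 1) := by
    rw [Multiset.map_map]
    exact Multiset.map_congr rfl fun i hi => if_pos (Finset.mem_range.1 hi)
  have shift_high (f : ℕ → ℤ) :
      (Finset.Ico c b).val.map (fun i => if i < c then f i + 1 else f i) =
      (Finset.Ico c b).val.map f :=
    Multiset.map_congr rfl fun i hi => if_neg (Finset.mem_Ico.1 hi).1.not_gt
  rw [shift_low, shift_low, shift_high, shift_high] at h2
  have hL := Multiset.eq_of_add_map_eq_add_map lt_add_one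
    (add_eq_add_of_add_eq_add_of_add_eq_add h1 h2)
  exact ⟨hL, add_left_cancel (hL ▸ h1)⟩

/-- if two equal multisets `{l_1,…,l_b}` and `{m_1,…,m_b}` remain equal after
adding `1` to the first `c` designated elements of each (`c ∈ [b−1]`), then the designated
sub-multisets `{l_1,…,l_c}` and `{m_1,…,m_c}` agree (and hence so do the complementary
sub-multisets). -/
theorem stmt13 (b c : ℕ) (hc1 : 1 ≤ c) (hc2 : c < b) (l m : ℕ → ℤ)
    (h1 : (Finset.range b).val.map l = (Finset.range b).val.map m)
    (h2 : (Finset.range b).val.map (fun i => if i < c then l i + 1 else l i) =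
          (Finset.range b).val.map (fun i => if i < c then m i + 1 else m i)) :
    (Finset.range c).val.map l = (Finset.range c).val.map m ∧
      (Finset.Ico c b).val.map l = (Finset.Ico c b).val.map m :=
  stmt13_general b c hc2 l m h1 h2
end

section
/- Let a, k ∈ ℕ and let s^1,…,s^a, t^1,…,t^a ∈ {0,1}^k. For distinct integers l_1,…,l_b ∈ [k] with b ∈ [a] and u ∈ {0,1}^k, define f(l_1,…,l_b; u) = ∑_{i=1}^b ∑_{m=1}^{l_i} u_m. Suppose that for every choice of b ∈ [a] and distinct l_1,…,l_b ∈ [k], the multisets {f(l_1,…,l_b; s^j) : j ∈ [a]} and {f(l_1,…,l_b; t^j) : j ∈ [a]} are equal. Then there exists a permutation σ of [a] such that s^i = t^{σ(i)} for all i ∈ [a]. -/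
/-!
Identify a binary word `u` with its support `X ⊆ [0, k)`, so that `∑_{m < l} u_m` becomes
`prefixCard l X = #{m ∈ X | m < l}`. The hypothesis gives equal sums over the two families of
supports for every power of `∑_{l ∈ T} prefixCard l`, and polarization turns these into the
products `∏_{l ∈ L} prefixCard l`, `|L| ≤ a`. Since `prefixCard (m + 1) - prefixCard m = [m ∈ X]`
is `0`/`1`-valued, repeated factors can be removed, and expanding `∏_{m ∈ S} [m ∈ X]` shows that
the two families contain equally many supersets of each `S` with `|S| ≤ a`.

A nonzero `c : Finset α → ℤ` on the subsets of `U` whose moments `∑_{Z ⊇ S} c Z` vanish for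
`|S| < d` has `ℓ¹`-norm at least `2 ^ d` (split along one element of `U`). The difference of the
two counting functions has norm at most `2a < 2 ^ (a + 1)`, so it vanishes.
-/

open Finset

theorem Finset.sum_powerset_neg_one_pow_mul_sum_pow {R α : Type*} [CommRing R] [DecidableEq α]
    (x : α → R) (L : Finset α) {j : ℕ} (hj : j ≤ #L) :
    ∑ T ∈ L.powerset, (-1) ^ (#L - #T) * (∑ l ∈ T, x l) ^ j =
      if j = #L then ((#L).factorial : R) * ∏ l ∈ L, x l else 0 := by
  induction L using Finset.induction_on generalizing j with
  | empty => simp_all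
  | @insert a L ha ih =>
    rw [card_insert_of_notMem ha] at hj ⊢
    have hbinom : ∀ T ∈ L.powerset,
        (-1) ^ (#L + 1 - #T) * (∑ l ∈ T, x l) ^ j
          + (-1) ^ (#L + 1 - #(insert a T)) * (∑ l ∈ insert a T, x l) ^ j
        = ∑ i ∈ range j, (x a ^ (i + 1) * j.choose (i + 1)) *
            ((-1) ^ (#L - #T) * (∑ l ∈ T, x l) ^ (j - (i + 1))) := by
      intro T hT
      have hTL : #T ≤ #L := card_le_card (mem_powerset.1 hT)
      have haT : a ∉ T := fun h => ha (mem_powerset.1 hT h)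
      rw [card_insert_of_notMem haT, sum_insert haT, add_pow, sum_range_succ',
        show #L + 1 - #T = #L - #T + 1 by omega, show #L + 1 - (#T + 1) = #L - #T by omega]
      simp only [pow_zero, one_mul, Nat.sub_zero, Nat.choose_zero_right, Nat.cast_one, mul_one,
        pow_succ (-1 : R), mul_add, mul_sum]
      ring_nf
    rw [sum_powerset_insert ha, ← sum_add_distrib, sum_congr rfl hbinom, sum_comm]
    simp_rw [← mul_sum]
    rw [sum_congr rfl fun i hi => congrArg (x a ^ (i + 1) * j.choose (i + 1) * ·)
      (ih (j := j - (i + 1)) (by have := mem_range.1 hi; omega))]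
    split_ifs with hjL
    · subst hjL
      rw [sum_eq_single_of_mem 0 (by simp) fun i hi hi0 => by
          rw [if_neg (by have := mem_range.1 hi; omega), mul_zero],
        if_pos (by omega), prod_insert ha, Nat.factorial_succ]
      push_cast [Nat.choose_one_right]
      ring
    · exact sum_eq_zero fun i hi => by rw [if_neg (by have := mem_range.1 hi; omega), mul_zero]

namespace Submodule

variable {A : Type*} [CommRing A] [Algebra ℚ A] (V : Submodule ℚ A)

theorem neg_one_pow_mul_mem {x : A} (n : ℕ) (hx : x ∈ V) : (-1) ^ n * x ∈ V := by
  rcases neg_one_pow_eq_or A n with h | h <;> simp [h, hx, V.neg_mem]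

theorem prod_mem_of_sum_pow_mem {α : Type*} [DecidableEq α] (f : α → A) (L : Finset α)
    (h : ∀ T ⊆ L, (∑ l ∈ T, f l) ^ #L ∈ V) : ∏ l ∈ L, f l ∈ V := by
  have hfac : ((#L).factorial : ℚ) ≠ 0 := by positivity
  have hpolar := sum_powerset_neg_one_pow_mul_sum_pow f L le_rfl
  rw [if_pos rfl] at hpolar
  rw [← V.smul_mem_iff hfac, Nat.cast_smul_eq_nsmul, nsmul_eq_mul, ← hpolar]
  exact V.sum_mem fun T hT => V.neg_one_pow_mul_mem _ (h T (mem_powerset.1 hT))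

end Submodule

def prefixCard (l : ℕ) (X : Finset ℕ) : ℚ := #{m ∈ X | m < l}

@[simp] theorem prefixCard_zero : prefixCard 0 = 0 := by
  funext X
  simp [prefixCard]

theorem prefixCard_succ (m : ℕ) :
    prefixCard (m + 1) = prefixCard m + fun X => if m ∈ X then 1 else 0 := by
  funext X
  simp only [prefixCard, Pi.add_apply, Nat.lt_succ_iff_lt_or_eq, filter_or, filter_eq']
  split_ifs with hm
  · rw [union_comm, ← insert_eq, card_insert_of_notMem (by simp)]
    push_cast
    ring
  · simp

theorem prefixCard_succ_sq (m : ℕ) :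
    prefixCard (m + 1) ^ 2 = 2 * prefixCard (m + 1) * prefixCard m - prefixCard m ^ 2
      + prefixCard (m + 1) - prefixCard m := by
  have hidem : (fun X : Finset ℕ => if m ∈ X then (1 : ℚ) else 0) ^ 2 =
      fun X => if m ∈ X then 1 else 0 := by
    funext X
    split_ifs <;> simp [*]
  rw [prefixCard_succ]
  linear_combination hidem

theorem sum_prefixCard_filter_eq_one {k : ℕ} {T : Finset ℕ} (hT : ∀ l ∈ T, l ≤ k)
    {u : ℕ → ℕ} (hu : ∀ m < k, u m ≤ 1) :
    (∑ l ∈ T, prefixCard l) {m ∈ range k | u m = 1} =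
      ((∑ l ∈ T, ∑ m ∈ range l, u m : ℕ) : ℚ) := by
  rw [Finset.sum_apply]
  push_cast
  refine sum_congr rfl fun l hl => ?_
  have hset : {m ∈ {m ∈ range k | u m = 1} | m < l} = {m ∈ range l | u m = 1} := by
    ext m
    have := hT l hl
    simp only [mem_filter, mem_range]
    constructor <;> rintro ⟨h1, h2⟩ <;> omega
  rw [prefixCard, hset, ← sum_boole]
  refine sum_congr rfl fun m hm => ?_
  have hmk : m < k := (mem_range.1 hm).trans_le (hT l hl)
  rcases Nat.le_one_iff_eq_zero_or_eq_one.1 (hu m hmk) with h | h <;> simp [h]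

section PrefixCardSpan

variable {V : Submodule ℚ (Finset ℕ → ℚ)} {d k : ℕ}

theorem multiset_prod_map_prefixCard_mem
    (hV : ∀ L ⊆ Icc 1 k, #L ≤ d → ∏ l ∈ L, prefixCard l ∈ V)
    (M : Multiset ℕ) (hMd : Multiset.card M ≤ d) (hMk : ∀ l ∈ M, l ≤ k) :
    (M.map prefixCard).prod ∈ V := by
  induction hn : M.sum using Nat.strong_induction_on generalizing M with
  | _ n ih =>
  subst hn
  by_cases h0 : 0 ∈ M
  · rw [Multiset.prod_eq_zero (prefixCard_zero ▸ Multiset.mem_map_of_mem prefixCard h0)]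
    exact V.zero_mem
  by_cases hnd : M.Nodup
  · have hL : M.toFinset ⊆ Icc 1 k := fun l hl => by
      have hlM := Multiset.mem_toFinset.1 hl
      have : l ≠ 0 := by rintro rfl; exact h0 hlM
      have := hMk l hlM
      rw [mem_Icc]
      omega
    have := hV M.toFinset hL (by rwa [Multiset.toFinset_card_of_nodup hnd])
    rwa [prod_eq_multiset_prod, Multiset.toFinset_val, hnd.dedup] at this
  obtain ⟨m, R, rfl⟩ : ∃ m R, M = m ::ₘ m ::ₘ R := by
    simpa [Multiset.nodup_iff_ne_cons_cons] using hnd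
  obtain ⟨m, rfl⟩ : ∃ m', m = m' + 1 :=
    Nat.exists_eq_succ_of_ne_zero (by rintro rfl; simp at h0)
  simp only [Multiset.forall_mem_cons, Multiset.card_cons, Multiset.sum_cons] at hMk hMd ih
  have ih' : ∀ M' : Multiset ℕ, M'.sum < m + 1 + (m + 1 + R.sum) → Multiset.card M' ≤ d →
      (∀ l ∈ M', l ≤ k) → (M'.map prefixCard).prod ∈ V :=
    fun M' h1 h2 h3 => ih _ h1 M' h2 h3 rfl
  -- `prefixCard_succ_sq` trades a repeated factor for terms of smaller total index.
  have hreduce : (((m + 1) ::ₘ (m + 1) ::ₘ R).map prefixCard).prod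
      = (2 : ℚ) • (((m + 1) ::ₘ m ::ₘ R).map prefixCard).prod
        - ((m ::ₘ m ::ₘ R).map prefixCard).prod
        + (((m + 1) ::ₘ R).map prefixCard).prod - ((m ::ₘ R).map prefixCard).prod := by
    simp only [Multiset.map_cons, Multiset.prod_cons, ofNat_smul_eq_nsmul, nsmul_eq_mul]
    linear_combination (R.map prefixCard).prod * prefixCard_succ_sq m
  rw [hreduce]
  refine V.sub_mem (V.add_mem (V.sub_mem (V.smul_mem _ (ih' _ ?_ ?_ ?_)) (ih' _ ?_ ?_ ?_))
    (ih' _ ?_ ?_ ?_)) (ih' _ ?_ ?_ ?_) <;>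
    simp only [Multiset.sum_cons, Multiset.card_cons, Multiset.forall_mem_cons] <;>
    first | omega | exact ⟨by omega, by omega, hMk.2.2⟩ | exact ⟨by omega, hMk.2.2⟩

theorem superset_indicator_mem
    (hV : ∀ M : Multiset ℕ, Multiset.card M ≤ d → (∀ l ∈ M, l ≤ k) →
      (M.map prefixCard).prod ∈ V)
    {S : Finset ℕ} (hSk : S ⊆ range k) (hSd : #S ≤ d) :
    (fun X => if S ⊆ X then 1 else 0) ∈ V := by
  have hind : (fun X : Finset ℕ => if S ⊆ X then (1 : ℚ) else 0) =
      ∏ m ∈ S, (prefixCard (m + 1) - prefixCard m) := by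
    funext X
    simp only [prefixCard_succ, add_sub_cancel_left, Finset.prod_apply, prod_boole]
    rfl
  rw [hind, prod_sub]
  refine V.sum_mem fun T hT => ?_
  have hTS := mem_powerset.1 hT
  have hmul : (∏ i ∈ S \ T, prefixCard (i + 1)) * ∏ i ∈ T, prefixCard i =
      (((S \ T).val.map (· + 1) + T.val).map prefixCard).prod := by
    rw [Multiset.map_add, Multiset.prod_add, Multiset.map_map]
    rfl
  rw [mul_assoc, hmul]
  refine V.neg_one_pow_mul_mem _ (hV _ ?_ ?_)
  · rwa [Multiset.card_add, Multiset.card_map, card_val, card_val,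
      card_sdiff_add_card_eq_card hTS]
  · simp only [Multiset.mem_add, Multiset.mem_map, mem_val]
    rintro l (⟨i, hi, rfl⟩ | hl)
    · exact mem_range.1 (hSk (mem_sdiff.1 hi).1)
    · exact (mem_range.1 (hSk (hTS hl))).le

end PrefixCardSpan

theorem two_pow_le_sum_abs_of_moments_eq_zero {α : Type*} [DecidableEq α] (U : Finset α)
    {d : ℕ} {c : Finset α → ℤ}
    (hmom : ∀ S ⊆ U, #S < d → ∑ Z ∈ U.powerset, (if S ⊆ Z then c Z else 0) = 0)
    (hc : ∃ Z ∈ U.powerset, c Z ≠ 0) : 2 ^ d ≤ ∑ Z ∈ U.powerset, |c Z| := by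
  induction U using Finset.induction_on generalizing d c with
  | empty =>
    obtain ⟨Z, hZ, hcZ⟩ := hc
    simp only [powerset_empty, mem_singleton, sum_singleton] at hZ ⊢
    subst hZ
    rcases Nat.eq_zero_or_pos d with rfl | hd
    · simpa using Int.one_le_abs hcZ
    · exact absurd (by simpa using hmom ∅ (empty_subset _) (by simpa)) hcZ
  | @insert a U ha ih =>
    have hsplit : ∀ S ⊆ U, ∑ Z ∈ (insert a U).powerset, (if S ⊆ Z then c Z else 0) =
        ∑ Z ∈ U.powerset, if S ⊆ Z then c Z + c (insert a Z) else 0 := by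
      intro S hS
      rw [sum_powerset_insert ha, ← sum_add_distrib]
      refine sum_congr rfl fun Z _ => ?_
      simp only [subset_insert_iff_of_notMem fun haS => ha (hS haS)]
      split_ifs <;> simp
    have hsplit_insert : ∀ S ⊆ U,
        ∑ Z ∈ (insert a U).powerset, (if insert a S ⊆ Z then c Z else 0) =
          ∑ Z ∈ U.powerset, if S ⊆ Z then c (insert a Z) else 0 := by
      intro S hS
      rw [sum_powerset_insert ha, sum_eq_zero fun Z hZ => if_neg fun h =>
        ha (mem_powerset.1 hZ (h (mem_insert_self a S))), zero_add]
      refine sum_congr rfl fun Z _ => ?_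
      simp only [insert_subset_insert_iff fun haS => ha (hS haS)]
    rw [sum_powerset_insert ha]
    by_cases h0 : ∃ Z ∈ U.powerset, c Z + c (insert a Z) ≠ 0
    · calc (2 : ℤ) ^ d ≤ ∑ Z ∈ U.powerset, |c Z + c (insert a Z)| :=
            ih (fun S hS hSd => (hsplit S hS).symm.trans
              (hmom S (hS.trans (subset_insert _ _)) hSd)) h0
        _ ≤ _ := by
            rw [← sum_add_distrib]
            exact sum_le_sum fun Z _ => abs_add_le _ _
    · push Not at h0
      have h1 : ∃ Z ∈ U.powerset, c (insert a Z) ≠ 0 := by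
        by_contra! h1
        obtain ⟨Z, hZ, hcZ⟩ := hc
        rw [mem_powerset] at hZ
        by_cases haZ : a ∈ Z
        · rw [← insert_erase haZ] at hcZ
          exact hcZ (h1 _ (mem_powerset.2 (subset_insert_iff.1 hZ)))
        · have hZU := mem_powerset.2 ((subset_insert_iff_of_notMem haZ).1 hZ)
          exact hcZ (by linarith [h0 Z hZU, h1 Z hZU])
      have hhalf := ih (d := d - 1) (c := fun Z => c (insert a Z)) (fun S hS hSd =>
        (hsplit_insert S hS).symm.trans (hmom _ (insert_subset_insert a hS)
          ((card_insert_le a S).trans_lt (by omega)))) h1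
      have hsym : ∑ Z ∈ U.powerset, |c Z| = ∑ Z ∈ U.powerset, |c (insert a Z)| :=
        sum_congr rfl fun Z hZ => by rw [eq_neg_of_add_eq_zero_left (h0 Z hZ), abs_neg]
      calc (2 : ℤ) ^ d ≤ 2 * 2 ^ (d - 1) := by
            rcases d with _ | d
            · norm_num
            · rw [pow_succ]; simp [mul_comm]
        _ ≤ _ := by rw [hsym]; linarith

theorem sum_superset_card_fiber {ι α : Type*} [Fintype ι] [DecidableEq α] (U : Finset α)
    (W : ι → Finset α) (hW : ∀ i, W i ⊆ U) (S : Finset α) :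
    ∑ Z ∈ U.powerset, (if S ⊆ Z then #{i | W i = Z} else 0) = #{i | S ⊆ W i} := by
  rw [card_eq_sum_card_fiberwise (f := W) (t := U.powerset) fun i _ => mem_powerset.2 (hW i)]
  refine sum_congr rfl fun Z _ => ?_
  rw [filter_filter]
  split_ifs with hSZ
  · congr 1
    ext i
    simp only [mem_filter, mem_univ, true_and]
    exact ⟨fun hWZ => ⟨hWZ ▸ hSZ, hWZ⟩, And.right⟩
  · refine (card_eq_zero.2 (filter_eq_empty_iff.2 ?_)).symm
    rintro i - ⟨hS, rfl⟩
    exact hSZ hS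

theorem exists_perm_of_card_superset_eq {ι α : Type*} [Fintype ι] [DecidableEq α]
    (U : Finset α) {d : ℕ} {X Y : ι → Finset α} (hX : ∀ i, X i ⊆ U) (hY : ∀ i, Y i ⊆ U)
    (hcard : 2 * Fintype.card ι < 2 ^ d)
    (h : ∀ S ⊆ U, #S < d → #{i | S ⊆ X i} = #{i | S ⊆ Y i}) :
    ∃ σ : Equiv.Perm ι, ∀ i, X i = Y (σ i) := by
  have hfiber : ∀ W : ι → Finset α, (∀ i, W i ⊆ U) → ∀ S,
      ∑ Z ∈ U.powerset, (if S ⊆ Z then (#{i | W i = Z} : ℤ) else 0) = #{i | S ⊆ W i} :=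
    fun W hW S => by exact_mod_cast sum_superset_card_fiber U W hW S
  set c : Finset α → ℤ := fun Z => #{i | X i = Z} - #{i | Y i = Z}
  have hc : ∀ Z ∈ U.powerset, c Z = 0 := by
    by_contra! hne
    have hlow := two_pow_le_sum_abs_of_moments_eq_zero U (d := d) (c := c) (fun S hS hSd => by
      calc ∑ Z ∈ U.powerset, (if S ⊆ Z then c Z else 0)
          = ∑ Z ∈ U.powerset, ((if S ⊆ Z then (#{i | X i = Z} : ℤ) else 0) -
              if S ⊆ Z then (#{i | Y i = Z} : ℤ) else 0) :=
            sum_congr rfl fun Z _ => by split_ifs <;> simp [c]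
        _ = 0 := by rw [sum_sub_distrib, hfiber X hX, hfiber Y hY, h S hS hSd, sub_self]) hne
    have hup : ∑ Z ∈ U.powerset, |c Z| ≤ 2 * Fintype.card ι := by
      calc ∑ Z ∈ U.powerset, |c Z|
          ≤ ∑ Z ∈ U.powerset, ((#{i | X i = Z} : ℤ) + #{i | Y i = Z}) :=
            sum_le_sum fun Z _ => (abs_sub _ _).trans (by simp)
        _ = 2 * Fintype.card ι := by
            simpa [sum_add_distrib, two_mul] using
              congrArg₂ (· + ·) (hfiber X hX ∅) (hfiber Y hY ∅)
    have : (2 * Fintype.card ι : ℤ) < 2 ^ d := by exact_mod_cast hcard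
    omega
  have hfib : ∀ Z, Fintype.card {i // X i = Z} = Fintype.card {i // Y i = Z} := by
    intro Z
    rw [Fintype.card_subtype, Fintype.card_subtype]
    by_cases hZ : Z ⊆ U
    · have := hc Z (mem_powerset.2 hZ)
      simp only [c] at this
      omega
    · rw [filter_false_of_mem fun i _ (h : X i = Z) => hZ (h ▸ hX i),
        filter_false_of_mem fun i _ (h : Y i = Z) => hZ (h ▸ hY i)]
  exact ⟨Equiv.ofFiberEquiv fun Z => Fintype.equivOfCardEq (hfib Z),
    fun i => (Equiv.ofFiberEquiv_map _ i).symm⟩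

def sumEqSubmodule {ι β : Type*} [Fintype ι] (X Y : ι → β) : Submodule ℚ (β → ℚ) where
  carrier := {f | ∑ i, f (X i) = ∑ i, f (Y i)}
  add_mem' hf hg := by simp_all [sum_add_distrib]
  zero_mem' := by simp
  smul_mem' c f hf := by simp_all [← mul_sum]

theorem mem_sumEqSubmodule {ι β : Type*} [Fintype ι] {X Y : ι → β} {f : β → ℚ} :
    f ∈ sumEqSubmodule X Y ↔ ∑ i, f (X i) = ∑ i, f (Y i) :=
  Iff.rfl

theorem sum_prefixCard_pow_mem_sumEqSubmodule {ι : Type*} [Fintype ι] {k : ℕ}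
    {s t : ι → ℕ → ℕ}
    (hs : ∀ i, ∀ m < k, s i m ≤ 1) (ht : ∀ i, ∀ m < k, t i m ≤ 1) {T : Finset ℕ}
    (hTk : ∀ l ∈ T, l ≤ k)
    (hmap : univ.val.map (fun i => ∑ l ∈ T, ∑ m ∈ range l, s i m) =
      univ.val.map (fun i => ∑ l ∈ T, ∑ m ∈ range l, t i m)) (p : ℕ) :
    (∑ l ∈ T, prefixCard l) ^ p ∈
      sumEqSubmodule (fun i => {m ∈ range k | s i m = 1})
        (fun i => {m ∈ range k | t i m = 1}) := by
  have hsum := congrArg (fun M => (M.map fun n : ℕ => (n : ℚ) ^ p).sum) hmap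
  simp only [Multiset.map_map, Function.comp_def, sum_map_val] at hsum
  simpa only [mem_sumEqSubmodule, Pi.pow_apply, sum_prefixCard_filter_eq_one hTk (hs _),
    sum_prefixCard_filter_eq_one hTk (ht _)] using hsum

theorem stmt14_general (a k : ℕ)
    (s t : Fin a → ℕ → ℕ)
    (hs : ∀ i j, j < k → s i j ≤ 1) (ht : ∀ i j, j < k → t i j ≤ 1)
    (h : ∀ L : Finset ℕ, L ⊆ Finset.Icc 1 k → 1 ≤ L.card → L.card ≤ a →
      Multiset.map (fun i : Fin a => ∑ li ∈ L, ∑ m ∈ Finset.range li, s i m)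
          Finset.univ.val =
        Multiset.map (fun i : Fin a => ∑ li ∈ L, ∑ m ∈ Finset.range li, t i m)
          Finset.univ.val) :
    ∃ σ : Equiv.Perm (Fin a), ∀ i, ∀ j < k, s i j = t (σ i) j := by
  set X : Fin a → Finset ℕ := fun i => {m ∈ range k | s i m = 1}
  set Y : Fin a → Finset ℕ := fun i => {m ∈ range k | t i m = 1}
  have hpow : ∀ T ⊆ Icc 1 k, #T ≤ a → ∀ p,
      (∑ l ∈ T, prefixCard l) ^ p ∈ sumEqSubmodule X Y := by
    intro T hT hTa p
    rcases T.eq_empty_or_nonempty with rfl | hne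
    · simp [mem_sumEqSubmodule]
    exact sum_prefixCard_pow_mem_sumEqSubmodule hs ht (fun l hl => (mem_Icc.1 (hT hl)).2)
      (h T hT (card_pos.2 hne) hTa) p
  have hsub : ∀ S ⊆ range k, #S < a + 1 → #{i | S ⊆ X i} = #{i | S ⊆ Y i} := by
    intro S hS hSa
    have := superset_indicator_mem (multiset_prod_map_prefixCard_mem fun L hL hLa =>
      (sumEqSubmodule X Y).prod_mem_of_sum_pow_mem _ L fun T hTL =>
        hpow T (hTL.trans hL) ((card_le_card hTL).trans hLa) _) hS (Nat.lt_succ_iff.1 hSa)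
    simpa [mem_sumEqSubmodule, sum_boole] using this
  obtain ⟨σ, hσ⟩ := exists_perm_of_card_superset_eq (range k) (fun i => filter_subset _ _)
    (fun i => filter_subset _ _) (by have := a.lt_two_pow_self; simp; omega) hsub
  refine ⟨σ, fun i j hj => ?_⟩
  have hmem := congrArg (j ∈ ·) (hσ i)
  simp only [mem_filter, mem_range, hj, true_and, eq_iff_iff] at hmem
  have := hs i j hj
  have := ht (σ i) j hj
  omega

/-- binary sequences `s^1,…,s^a, t^1,…,t^a ∈ {0,1}^k`.  If for every `b ∈ [a]`
and all distinct `l_1,…,l_b ∈ [k]` (encoded as a finset `L ⊆ [k]` with `1 ≤ |L| ≤ a`) the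
multisets of values `f(l_1,…,l_b; s^j) = ∑_{i} ∑_{m=1}^{l_i} s^j_m` for the `s`-sequences and
for the `t`-sequences agree, then the `t`-sequences are a permutation of the `s`-sequences. -/
theorem stmt14 (a k : ℕ) (ha : 1 ≤ a) (hk : 1 ≤ k)
    (s t : Fin a → ℕ → ℕ)
    (hs : ∀ i j, j < k → s i j ≤ 1) (ht : ∀ i j, j < k → t i j ≤ 1)
    (h : ∀ L : Finset ℕ, L ⊆ Finset.Icc 1 k → 1 ≤ L.card → L.card ≤ a →
      Multiset.map (fun i : Fin a => ∑ li ∈ L, ∑ m ∈ Finset.range li, s i m)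
          Finset.univ.val =
        Multiset.map (fun i : Fin a => ∑ li ∈ L, ∑ m ∈ Finset.range li, t i m)
          Finset.univ.val) :
    ∃ σ : Equiv.Perm (Fin a), ∀ i, ∀ j < k, s i j = t (σ i) j :=
  stmt14_general a k s t hs ht h
end

section
/- Fix a prime p and natural numbers l_1 < l_2 < ⋯ < l_n, and write p_j = p^{l_j}. For a set partition α of [n], define M₀(α) = ∏_{τ∈α} (−1)^{|τ|−1} M(τ), where for τ = {t_1 < ⋯ < t_z}, M(τ) = p_{t_z}(p_{t_z}+p_{t_{z−1}})⋯(p_{t_z}+⋯+p_{t_2}) if z ≥ 2 and M(τ) = 1 if z = 1. Let M_i(α) be the coefficient of (p^k)^i in ∏_{τ∈α} R^τ_k viewed as a polynomial in p^k, where R^τ_k = (p^k − p_{t_z})(p^k − p_{t_z} − p_{t_{z−1}})⋯(p^k − p_{t_z} − ⋯ − p_{t_2}) for z ≥ 2 and R^τ_k = 1 for z = 1. Then for all i ≥ 0, M_i(α) = ∑_{β ∈ Cut(α,i)} M₀(β), where Cut(α,i) is the set of set partitions β of [n] refining α with |β| = |α| + i. -/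
open scoped Classical

/-- `ρ` (a finset of finsets) is a set partition of the whole finite type `α`. -/
def IsSetPartition {α : Type*} [Fintype α] [DecidableEq α] (ρ : Finset (Finset α)) : Prop :=
  (∀ t ∈ ρ, t.Nonempty) ∧ (ρ : Set (Finset α)).PairwiseDisjoint id ∧
    ρ.sup id = Finset.univ

/-- For a block `τ ⊆ [n]` and `p_j = p^{l_j}`, the polynomial
`R^τ(X) = ∏_{a=2}^{z} (X − p_{t_z} − ⋯ − p_{t_a})`, where `τ = {t_1 < ⋯ < t_z}`
(the factors are indexed by the non-minimal elements `s` of `τ`, the factor for `s`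
being `X − ∑_{s' ∈ τ, s' ≥ s} p_{s'}`). -/
noncomputable def Rpoly {n : ℕ} (p : ℕ) (l : Fin n → ℕ) (τ : Finset (Fin n)) :
    Polynomial ℤ :=
  ∏ s ∈ τ.filter (fun s => ∃ s' ∈ τ, s' < s),
    (Polynomial.X - Polynomial.C (∑ s' ∈ τ.filter (fun s' => s ≤ s'), ((p : ℤ) ^ (l s'))))

/-- `M(τ) = p_{t_z}(p_{t_z}+p_{t_{z-1}})⋯(p_{t_z}+⋯+p_{t_2})` (and `1` if `|τ| = 1`). -/
noncomputable def Mterm {n : ℕ} (p : ℕ) (l : Fin n → ℕ) (τ : Finset (Fin n)) : ℤ :=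
  ∏ s ∈ τ.filter (fun s => ∃ s' ∈ τ, s' < s),
    (∑ s' ∈ τ.filter (fun s' => s ≤ s'), ((p : ℤ) ^ (l s')))

/-!
Multiplying out `∏_{τ ∈ α} R^τ` over the blocks of `α` reduces the claim to one block `τ`, where it
says `R^τ(x) = ∑_β M₀(β) x^{|β| - 1}`, the sum running over all set partitions `β` of `τ`: a choice
of a partition of every block of `α` is the same as a refinement of `α`, and `M₀` and the exponent
`|β| - |α|` are additive over the blocks.

The one-block identity follows by induction, adding the minimum `m` of `τ` to `τ' = τ \ {m}`.
On the left, `R^τ = (x - ∑_{j ∈ τ'} p_j) R^{τ'}`. On the right, every partition of `τ` arises from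
a partition `β'` of `τ'` either by adding `{m}` as a new block, which contributes `x M₀(β')
x^{|β'| - 1}`, or by inserting `m` into a block `σ` of `β'`, which multiplies `M₀(β')` by
`-∑_{j ∈ σ} p_j`; summing over `σ` gives the factor `-∑_{j ∈ τ'} p_j`.
-/

open Finset Polynomial

namespace Finset

variable {ι M : Type*} [LinearOrder ι]

theorem filter_exists_lt_eq_erase_min' (τ : Finset ι) (hτ : τ.Nonempty) :
    τ.filter (fun s => ∃ s' ∈ τ, s' < s) = τ.erase (τ.min' hτ) := by
  ext s
  simp only [mem_filter, mem_erase]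
  constructor
  · rintro ⟨hs, s', hs', hlt⟩
    exact ⟨((τ.min'_le s' hs').trans_lt hlt).ne', hs⟩
  · rintro ⟨hne, hs⟩
    exact ⟨hs, τ.min' hτ, τ.min'_mem hτ, (τ.min'_le s hs).lt_of_ne' hne⟩

theorem prod_filter_exists_lt_insert [CommMonoid M] (φ : Finset ι → M) {m : ι} {τ : Finset ι}
    (hτ : τ.Nonempty) (hm : ∀ s ∈ τ, m < s) :
    ∏ s ∈ (insert m τ).filter (fun s => ∃ s' ∈ insert m τ, s' < s),
        φ ((insert m τ).filter (s ≤ ·)) =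
      φ τ * ∏ s ∈ τ.filter (fun s => ∃ s' ∈ τ, s' < s), φ (τ.filter (s ≤ ·)) := by
  have hnonmin : (insert m τ).filter (fun s => ∃ s' ∈ insert m τ, s' < s) = τ := by
    rw [filter_exists_lt_eq_erase_min' _ (insert_nonempty m τ),
      le_antisymm (min'_le _ _ (mem_insert_self m τ))
        (le_min' _ _ _ fun s hs => (mem_insert.1 hs).elim ge_of_eq fun hs => (hm s hs).le),
      erase_insert fun h => lt_irrefl m (hm m h)]
  have htail : ∀ s ∈ τ, (insert m τ).filter (s ≤ ·) = τ.filter (s ≤ ·) := fun s hs => by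
    rw [filter_insert, if_neg (hm s hs).not_ge]
  rw [hnonmin, prod_congr rfl fun s hs => congrArg φ (htail s hs),
    filter_exists_lt_eq_erase_min' τ hτ, ← mul_prod_erase τ _ (min'_mem τ hτ),
    filter_true_of_mem fun s hs => min'_le τ s hs]

end Finset

namespace Finpartition

section GeneralizedBooleanAlgebra

variable {α : Type*} [GeneralizedBooleanAlgebra α] [DecidableEq α] {a b : α} (P : Finpartition a)

theorem parts_avoid_of_forall_eq_or_disjoint (h : ∀ d ∈ P.parts, d = b ∨ Disjoint d b) :
    (P.avoid b).parts = P.parts.erase b := by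
  ext c
  rw [mem_avoid, mem_erase]
  constructor
  · rintro ⟨d, hd, hdb, rfl⟩
    obtain rfl | hdisj := h d hd
    · exact absurd le_rfl hdb
    · rw [hdisj.sdiff_eq_left]
      exact ⟨fun hdb' => hdb hdb'.le, hd⟩
  · rintro ⟨hcb, hc⟩
    obtain rfl | hdisj := h c hc
    · exact absurd rfl hcb
    · exact ⟨c, hc, fun hle => P.ne_bot hc (hdisj.eq_bot_of_le hle), hdisj.sdiff_eq_left⟩

end GeneralizedBooleanAlgebra

variable {α : Type*} [DecidableEq α] {s : Finset α} {a : α}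

theorem sum_parts_sum (P : Finpartition s) {M : Type*} [AddCommMonoid M] (f : α → M) :
    ∑ c ∈ P.parts, ∑ x ∈ c, f x = ∑ x ∈ s, f x := by
  conv_rhs => rw [← P.biUnion_parts]
  rw [sum_biUnion P.supIndep.pairwiseDisjoint]
  rfl

theorem sum_univ_empty {M : Type*} [AddCommMonoid M] (f : Finset (Finset α) → M) :
    ∑ Q : Finpartition (∅ : Finset α), f Q.parts = f ∅ := by
  have : Unique (Finpartition (∅ : Finset α)) :=
    inferInstanceAs (Unique (Finpartition (⊥ : Finset α)))
  rw [Fintype.sum_unique, parts_eq_empty_iff.2 rfl]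

section Insert

theorem subset_of_mem_insert_empty (P : Finpartition s) {σ : Finset α}
    (hσ : σ ∈ insert ∅ P.parts) : σ ⊆ s := by
  obtain rfl | hσ := mem_insert.1 hσ
  · exact empty_subset s
  · exact P.le hσ

/-- Adds `a` to the part `σ` of `P`, or as a new singleton part when `σ = ∅`. -/
def insertInto (P : Finpartition s) (ha : a ∉ s) {σ : Finset α} (hσ : σ ∈ insert ∅ P.parts) :
    Finpartition (insert a s) :=
  (P.avoid σ).extend (insert_ne_empty a σ)
    (disjoint_insert_right.2 ⟨fun h => ha (mem_sdiff.1 h).1, sdiff_disjoint⟩)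
    (by rw [sup_eq_union, union_insert, sdiff_union_of_subset (P.subset_of_mem_insert_empty hσ)])

theorem parts_insertInto (P : Finpartition s) (ha : a ∉ s) {σ : Finset α}
    (hσ : σ ∈ insert ∅ P.parts) :
    (P.insertInto ha hσ).parts = insert (insert a σ) (P.parts.erase σ) := by
  rw [insertInto, extend_parts, parts_avoid_of_forall_eq_or_disjoint]
  intro d hd
  obtain rfl | hσ := mem_insert.1 hσ
  · exact Or.inr (disjoint_empty_right d)
  · by_cases hdσ : d = σ
    · exact Or.inl hdσ
    · exact Or.inr (P.disjoint hd hσ hdσ)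

theorem part_insertInto (P : Finpartition s) (ha : a ∉ s) {σ : Finset α}
    (hσ : σ ∈ insert ∅ P.parts) : (P.insertInto ha hσ).part a = insert a σ :=
  part_eq_of_mem _ (by rw [parts_insertInto]; exact mem_insert_self _ _) (mem_insert_self a σ)

theorem erase_part_insertInto (P : Finpartition s) (ha : a ∉ s) {σ : Finset α}
    (hσ : σ ∈ insert ∅ P.parts) : ((P.insertInto ha hσ).part a).erase a = σ := by
  rw [part_insertInto, erase_insert fun h => ha (P.subset_of_mem_insert_empty hσ h)]

def avoidSingleton (Q : Finpartition (insert a s)) (ha : a ∉ s) : Finpartition s :=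
  (Q.avoid {a}).copy (by rw [sdiff_singleton_eq_erase, erase_insert ha])

theorem mem_avoidSingleton {Q : Finpartition (insert a s)} {ha : a ∉ s} {c : Finset α} :
    c ∈ (Q.avoidSingleton ha).parts ↔ ∃ d ∈ Q.parts, d ≠ {a} ∧ d.erase a = c := by
  rw [avoidSingleton, copy_parts, mem_avoid]
  refine exists_congr fun d => and_congr_right fun hd => ?_
  rw [subset_singleton_iff, sdiff_singleton_eq_erase, or_iff_right (Q.ne_empty hd)]

theorem erase_part_mem_insert_empty (Q : Finpartition (insert a s)) (ha : a ∉ s) :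
    (Q.part a).erase a ∈ insert ∅ (Q.avoidSingleton ha).parts := by
  by_cases hB : Q.part a = {a}
  · rw [hB, erase_singleton]
    exact mem_insert_self _ _
  · exact mem_insert_of_mem
      (mem_avoidSingleton.2 ⟨_, Q.part_mem.2 (mem_insert_self a s), hB, rfl⟩)

theorem insertInto_avoidSingleton (Q : Finpartition (insert a s)) (ha : a ∉ s) :
    (Q.avoidSingleton ha).insertInto ha (Q.erase_part_mem_insert_empty ha) = Q := by
  have hB : Q.part a ∈ Q.parts := Q.part_mem.2 (mem_insert_self a s)
  have haB : a ∈ Q.part a := Q.mem_part_self.2 (mem_insert_self a s)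
  refine le_antisymm (fun c hc => ?_) (fun d hd => ?_)
  · rw [parts_insertInto, insert_erase haB] at hc
    obtain rfl | hc := mem_insert.1 hc
    · exact ⟨_, hB, le_rfl⟩
    · obtain ⟨d, hd, -, rfl⟩ := mem_avoidSingleton.1 (mem_of_mem_erase hc)
      exact ⟨d, hd, erase_subset a d⟩
  · rw [parts_insertInto, insert_erase haB]
    by_cases hdB : d = Q.part a
    · exact ⟨_, mem_insert_self _ _, hdB.le⟩
    have had : a ∉ d := fun had => hdB (Q.part_eq_of_mem hd had).symm
    refine ⟨d, mem_insert_of_mem (mem_erase.2 ⟨?_, ?_⟩), le_rfl⟩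
    · rintro rfl
      obtain ⟨x, hx⟩ := Q.nonempty_of_mem_parts hd
      exact hdB (Q.eq_of_mem_parts hd hB hx (erase_subset _ _ hx))
    · exact mem_avoidSingleton.2
        ⟨d, hd, by rintro rfl; simp at had, erase_eq_of_notMem had⟩

theorem avoidSingleton_insertInto (P : Finpartition s) (ha : a ∉ s) {σ : Finset α}
    (hσ : σ ∈ insert ∅ P.parts) : (P.insertInto ha hσ).avoidSingleton ha = P := by
  have haσ : a ∉ σ := fun h => ha (P.subset_of_mem_insert_empty hσ h)
  refine le_antisymm (fun c hc => ?_) (fun c hc => ?_)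
  · obtain ⟨d, hd, hda, rfl⟩ := mem_avoidSingleton.1 hc
    rw [parts_insertInto] at hd
    obtain rfl | hd := mem_insert.1 hd
    · obtain rfl | hσ := mem_insert.1 hσ
      · exact absurd rfl hda
      · exact ⟨σ, hσ, by rw [erase_insert haσ]⟩
    · exact ⟨d, mem_of_mem_erase hd, erase_subset a d⟩
  · have hac : a ∉ c := fun h => ha (P.le hc h)
    have hc' : c ≠ {a} := by rintro rfl; simp at hac
    by_cases hcσ : c = σ
    · subst hcσ
      refine ⟨c, mem_avoidSingleton.2 ⟨insert a c, ?_, ?_, erase_insert hac⟩, le_rfl⟩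
      · rw [parts_insertInto]; exact mem_insert_self _ _
      · intro h
        obtain ⟨x, hx⟩ := P.nonempty_of_mem_parts hc
        have hxa : x ∈ ({a} : Finset α) := h ▸ mem_insert_of_mem hx
        exact hac (mem_singleton.1 hxa ▸ hx)
    · refine ⟨c, mem_avoidSingleton.2 ⟨c, ?_, hc', erase_eq_of_notMem hac⟩, le_rfl⟩
      rw [parts_insertInto]
      exact mem_insert_of_mem (mem_erase.2 ⟨hcσ, hc⟩)

theorem sum_univ_insert {M : Type*} [AddCommMonoid M] (ha : a ∉ s)
    (f : Finset (Finset α) → M) :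
    ∑ Q : Finpartition (insert a s), f Q.parts =
      ∑ P : Finpartition s, ∑ σ ∈ insert ∅ P.parts, f (insert (insert a σ) (P.parts.erase σ)) := by
  rw [sum_sigma']
  refine sum_bij' (fun Q _ => ⟨Q.avoidSingleton ha, (Q.part a).erase a⟩)
    (fun x hx => x.1.insertInto ha (mem_sigma.1 hx).2)
    (fun Q _ => mem_sigma.2 ⟨mem_univ _, Q.erase_part_mem_insert_empty ha⟩)
    (fun _ _ => mem_univ _) (fun Q _ => Q.insertInto_avoidSingleton ha) (fun x hx => ?_)
    (fun Q _ => ?_)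
  · have hσ := (mem_sigma.1 hx).2
    simp only [avoidSingleton_insertInto _ _ hσ, erase_part_insertInto _ _ hσ]
  · conv_lhs => rw [← Q.insertInto_avoidSingleton ha]
    rw [parts_insertInto]

end Insert

section Refinement

variable (P : Finpartition s)

theorem bind_le (R : ∀ τ ∈ P.parts, Finpartition τ) : P.bind R ≤ P := by
  intro c hc
  obtain ⟨τ, hτ, hc⟩ := mem_bind.1 hc
  exact ⟨τ, hτ, (R τ hτ).le hc⟩

theorem parts_restrict_of_le {Q : Finpartition s} (hQ : Q ≤ P) {τ : Finset α}
    (hτ : τ ∈ P.parts) : (Q.restrict (P.le hτ)).parts = Q.parts.filter (· ⊆ τ) := by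
  ext c
  simp only [restrict, mem_erase, mem_image, mem_filter]
  constructor
  · rintro ⟨hc, d, hd, rfl⟩
    obtain ⟨τ', hτ', hdτ'⟩ := hQ hd
    by_cases h : τ' = τ
    · subst h
      rw [inf_eq_left.2 hdτ']
      exact ⟨hd, hdτ'⟩
    · exact absurd (disjoint_iff.1 ((P.disjoint hτ' hτ h).mono_left hdτ')) hc
  · rintro ⟨hc, hcτ⟩
    exact ⟨Q.ne_bot hc, c, hc, inf_eq_left.2 hcτ⟩

theorem filter_parts_bind (R : ∀ τ ∈ P.parts, Finpartition τ) {τ : Finset α}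
    (hτ : τ ∈ P.parts) : (P.bind R).parts.filter (· ⊆ τ) = (R τ hτ).parts := by
  ext c
  rw [mem_filter, mem_bind]
  constructor
  · rintro ⟨⟨τ', hτ', hc⟩, hcτ⟩
    obtain ⟨x, hx⟩ := (R τ' hτ').nonempty_of_mem_parts hc
    obtain rfl := P.eq_of_mem_parts hτ' hτ ((R τ' hτ').le hc hx) (hcτ hx)
    exact hc
  · exact fun hc => ⟨⟨τ, hτ, hc⟩, (R τ hτ).le hc⟩

theorem restrict_bind (R : ∀ τ ∈ P.parts, Finpartition τ) {τ : Finset α} (hτ : τ ∈ P.parts) :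
    (P.bind R).restrict (P.le hτ) = R τ hτ :=
  Finpartition.ext (by rw [parts_restrict_of_le P (P.bind_le R) hτ, filter_parts_bind])

theorem bind_restrict_of_le {Q : Finpartition s} (hQ : Q ≤ P) :
    P.bind (fun _ hτ => Q.restrict (P.le hτ)) = Q := by
  ext c
  rw [mem_bind]
  constructor
  · rintro ⟨τ, hτ, hc⟩
    rw [parts_restrict_of_le P hQ hτ] at hc
    exact (mem_filter.1 hc).1
  · intro hc
    obtain ⟨τ, hτ, hcτ⟩ := hQ hc
    exact ⟨τ, hτ, by rw [parts_restrict_of_le P hQ hτ]; exact mem_filter.2 ⟨hc, hcτ⟩⟩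

theorem sum_pi_bind {M : Type*} [AddCommMonoid M] (F : Finpartition s → M) :
    ∑ R ∈ P.parts.pi (fun _ => univ), F (P.bind R) = ∑ Q with Q ≤ P, F Q :=
  sum_nbij' (fun R => P.bind R) (fun Q _ hτ => Q.restrict (P.le hτ))
    (fun R _ => mem_filter.2 ⟨mem_univ _, P.bind_le R⟩)
    (fun _ _ => mem_pi.2 fun _ _ => mem_univ _)
    (fun R _ => funext₂ fun _ hτ => P.restrict_bind R hτ)
    (fun _ hQ => P.bind_restrict_of_le (mem_filter.1 hQ).2)
    (fun _ _ => rfl)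

theorem prod_parts_bind {M : Type*} [CommMonoid M] (R : ∀ τ ∈ P.parts, Finpartition τ)
    (g : Finset α → M) :
    ∏ c ∈ (P.bind R).parts, g c = ∏ τ ∈ P.parts.attach, ∏ c ∈ (R τ.1 τ.2).parts, g c := by
  rw [bind_parts]
  refine prod_biUnion fun τ _ τ' _ hne => disjoint_left.2 fun c hc hc' => ?_
  obtain ⟨x, hx⟩ := (R _ τ.2).nonempty_of_mem_parts hc
  exact hne (Subtype.ext
    (P.eq_of_mem_parts τ.2 τ'.2 ((R _ τ.2).le hc hx) ((R _ τ'.2).le hc' hx)))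

theorem prod_sum_eq_sum_le {A : Type*} [CommSemiring A] (g : Finset α → A) (x : A) :
    ∏ τ ∈ P.parts, ∑ R : Finpartition τ, (∏ c ∈ R.parts, g c) * x ^ (#R.parts - 1) =
      ∑ Q with Q ≤ P, (∏ c ∈ Q.parts, g c) * x ^ (#Q.parts - #P.parts) := by
  rw [prod_sum, ← sum_pi_bind]
  refine sum_congr rfl fun R _ => ?_
  have hcard : ∑ τ ∈ P.parts.attach, (#(R τ.1 τ.2).parts - 1) =
      #(P.bind R).parts - #P.parts := by
    rw [card_bind, sum_tsub_distrib _ fun τ _ =>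
      card_pos.2 ((R τ.1 τ.2).parts_nonempty (P.ne_bot τ.2)), sum_const, card_attach,
      smul_eq_mul, mul_one]
  rw [prod_mul_distrib, prod_parts_bind, prod_pow_eq_pow_sum, hcard]

end Refinement

section Fintype

variable [Fintype α]

def ofIsSetPartition {β : Finset (Finset α)} (h : IsSetPartition β) :
    Finpartition (univ : Finset α) where
  parts := β
  supIndep := supIndep_iff_pairwiseDisjoint.2 h.2.1
  sup_parts := h.2.2
  bot_notMem h0 := (h.1 ∅ h0).ne_empty rfl

theorem isSetPartition_parts (Q : Finpartition (univ : Finset α)) : IsSetPartition Q.parts :=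
  ⟨fun _ => Q.nonempty_of_mem_parts, Q.disjoint, Q.sup_parts⟩

theorem sum_filter_isSetPartition {M : Type*} [AddCommMonoid M]
    (q : Finset (Finset α) → Prop) [DecidablePred q] (f : Finset (Finset α) → M) :
    ∑ β with IsSetPartition β ∧ q β, f β = ∑ Q : Finpartition univ with q Q.parts, f Q.parts :=
  (sum_bij' (fun Q _ => Q.parts) (fun _ hβ => ofIsSetPartition (mem_filter.1 hβ).2.1)
    (fun Q hQ => mem_filter.2 ⟨mem_univ _, Q.isSetPartition_parts, (mem_filter.1 hQ).2⟩)
    (fun _ hβ => mem_filter.2 ⟨mem_univ _, (mem_filter.1 hβ).2.2⟩)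
    (fun _ _ => Finpartition.ext rfl) (fun _ _ => rfl) (fun _ _ => rfl)).symm

end Fintype

end Finpartition

section Blocks

variable {n : ℕ} (p : ℕ) (l : Fin n → ℕ)

theorem Rpoly_empty : Rpoly p l ∅ = 1 := by
  simp [Rpoly]

theorem Rpoly_singleton (m : Fin n) : Rpoly p l {m} = 1 := by
  simp [Rpoly, filter_singleton]

theorem Mterm_singleton (m : Fin n) : Mterm p l {m} = 1 := by
  simp [Mterm, filter_singleton]

theorem Rpoly_insert {m : Fin n} {τ : Finset (Fin n)} (hτ : τ.Nonempty) (hm : ∀ s ∈ τ, m < s) :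
    Rpoly p l (insert m τ) = (X - C (∑ s ∈ τ, (p : ℤ) ^ l s)) * Rpoly p l τ := by
  unfold Rpoly
  convert prod_filter_exists_lt_insert (fun σ => X - C (∑ s ∈ σ, (p : ℤ) ^ l s)) hτ hm

theorem Mterm_insert {m : Fin n} {τ : Finset (Fin n)} (hτ : τ.Nonempty) (hm : ∀ s ∈ τ, m < s) :
    Mterm p l (insert m τ) = (∑ s ∈ τ, (p : ℤ) ^ l s) * Mterm p l τ := by
  unfold Mterm
  convert prod_filter_exists_lt_insert (fun σ => ∑ s ∈ σ, (p : ℤ) ^ l s) hτ hm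

noncomputable def signedMterm (σ : Finset (Fin n)) : ℤ :=
  (-1) ^ (#σ - 1) * Mterm p l σ

theorem signedMterm_singleton (m : Fin n) : signedMterm p l {m} = 1 := by
  simp [signedMterm, Mterm_singleton]

theorem signedMterm_insert {m : Fin n} {σ : Finset (Fin n)} (hσ : σ.Nonempty)
    (hm : ∀ s ∈ σ, m < s) :
    signedMterm p l (insert m σ) = -(∑ s ∈ σ, (p : ℤ) ^ l s) * signedMterm p l σ := by
  obtain ⟨k, hk⟩ := Nat.exists_eq_add_of_lt (card_pos.2 hσ)
  rw [signedMterm, signedMterm, card_insert_of_notMem fun h => lt_irrefl m (hm m h),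
    Mterm_insert p l hσ hm, hk]
  simp only [Nat.add_sub_cancel, zero_add, pow_succ]
  ring

noncomputable def partitionTerm (β : Finset (Finset (Fin n))) : ℤ[X] :=
  (∏ c ∈ β, C (signedMterm p l c)) * X ^ (#β - 1)

theorem sum_partitionTerm_insert_min {m : Fin n} {τ : Finset (Fin n)} (hτ : τ.Nonempty)
    (hm : ∀ s ∈ τ, m < s) (P : Finpartition τ) :
    ∑ σ ∈ insert ∅ P.parts, partitionTerm p l (insert (insert m σ) (P.parts.erase σ)) =
      (X - C (∑ s ∈ τ, (p : ℤ) ^ l s)) * partitionTerm p l P.parts := by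
  have hmτ : m ∉ τ := fun h => lt_irrefl m (hm m h)
  have hpos : 0 < #P.parts := card_pos.2 (P.parts_nonempty hτ.ne_empty)
  have hsingle : {m} ∉ P.parts := fun h => hmτ (P.le h (mem_singleton_self m))
  have hblock : ∀ σ ∈ P.parts, partitionTerm p l (insert (insert m σ) (P.parts.erase σ)) =
      -C (∑ s ∈ σ, (p : ℤ) ^ l s) * partitionTerm p l P.parts := by
    intro σ hσ
    have hnew : insert m σ ∉ P.parts.erase σ := fun h =>
      hmτ (P.le (mem_of_mem_erase h) (mem_insert_self m σ))
    rw [partitionTerm, partitionTerm, prod_insert hnew, card_insert_of_notMem hnew,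
      card_erase_of_mem hσ, Nat.sub_add_cancel hpos, ← mul_prod_erase P.parts _ hσ,
      signedMterm_insert p l (P.nonempty_of_mem_parts hσ) fun s hs => hm s (P.le hσ hs),
      map_mul, map_neg]
    ring
  rw [sum_insert P.empty_notMem_parts, erase_eq_of_notMem P.empty_notMem_parts, insert_empty,
    sum_congr rfl hblock, ← sum_mul, sum_neg_distrib, ← map_sum, P.sum_parts_sum, partitionTerm,
    partitionTerm, prod_insert hsingle, card_insert_of_notMem hsingle, signedMterm_singleton,
    map_one, one_mul, Nat.add_sub_cancel, ← Nat.sub_add_cancel hpos, pow_succ',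
    Nat.add_sub_cancel]
  ring

theorem Rpoly_eq_sum_partitionTerm (τ : Finset (Fin n)) :
    Rpoly p l τ = ∑ Q : Finpartition τ, partitionTerm p l Q.parts := by
  induction τ using Finset.induction_on_min with
  | empty =>
    rw [Rpoly_empty, Finpartition.sum_univ_empty (partitionTerm p l)]
    simp [partitionTerm]
  | insert m τ hm ih =>
    rw [Finpartition.sum_univ_insert fun h => lt_irrefl m (hm m h)]
    obtain rfl | hτ := τ.eq_empty_or_nonempty
    · rw [insert_empty, Rpoly_singleton, Finpartition.sum_univ_empty
        (fun β => ∑ σ ∈ insert ∅ β, partitionTerm p l (insert (insert m σ) (β.erase σ)))]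
      simp [partitionTerm, signedMterm_singleton]
    · rw [Rpoly_insert p l hτ hm, ih, mul_sum]
      exact (sum_congr rfl fun P _ => sum_partitionTerm_insert_min p l hτ hm P).symm

theorem coeff_prod_Rpoly {s : Finset (Fin n)} (P : Finpartition s) (i : ℕ) :
    (∏ τ ∈ P.parts, Rpoly p l τ).coeff i =
      ∑ Q with Q ≤ P ∧ #Q.parts = #P.parts + i, ∏ c ∈ Q.parts, signedMterm p l c := by
  simp only [Rpoly_eq_sum_partitionTerm, partitionTerm]
  rw [P.prod_sum_eq_sum_le, finsetSum_coeff]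
  conv_rhs => rw [← filter_filter, sum_filter]
  refine sum_congr rfl fun Q hQ => ?_
  have hcard := Finpartition.card_mono (mem_filter.1 hQ).2
  rw [← map_prod, coeff_C_mul_X_pow]
  exact if_congr (by omega) rfl rfl

end Blocks

theorem stmt16_general (p n : ℕ) (l : Fin n → ℕ)
    (α : Finset (Finset (Fin n))) (hα : IsSetPartition α) (i : ℕ) :
    (∏ τ ∈ α, Rpoly p l τ).coeff i =
      ∑ β ∈ Finset.univ.filter (fun β : Finset (Finset (Fin n)) =>
          IsSetPartition β ∧ (∀ τ ∈ β, ∃ τ' ∈ α, τ ⊆ τ') ∧ β.card = α.card + i),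
        ∏ τ ∈ β, ((-1 : ℤ) ^ (τ.card - 1) * Mterm p l τ) := by
  rw [Finpartition.sum_filter_isSetPartition]
  convert coeff_prod_Rpoly p l (Finpartition.ofIsSetPartition hα) i using 3 <;> rfl

/-- for any set partition `α` of `[n]` and any `i ≥ 0`, the coefficient
`M_i(α)` of `x^i` in `∏_{τ∈α} R^τ(x)` equals `∑_{β ∈ Cut(α,i)} M₀(β)`, where `Cut(α,i)`
is the set of partitions `β` refining `α` with `|β| = |α| + i`, and
`M₀(β) = ∏_{τ∈β} (−1)^{|τ|−1} M(τ)`. -/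
theorem stmt16 (p n : ℕ) (hp : p.Prime) (l : Fin n → ℕ) (hl : StrictMono l)
    (hl1 : ∀ j, 1 ≤ l j)
    (α : Finset (Finset (Fin n))) (hα : IsSetPartition α) (i : ℕ) :
    (∏ τ ∈ α, Rpoly p l τ).coeff i =
      ∑ β ∈ Finset.univ.filter (fun β : Finset (Finset (Fin n)) =>
          IsSetPartition β ∧ (∀ τ ∈ β, ∃ τ' ∈ α, τ ⊆ τ') ∧ β.card = α.card + i),
        ∏ τ ∈ β, ((-1 : ℤ) ^ (τ.card - 1) * Mterm p l τ) :=
  stmt16_general p n l α hα i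
end
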